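/- arXiv:2504.18517 — 6 statements merged into one kernel-verified Lean document; each statement's English description precedes it below -/
import Mathlib

section
/- Let n ≥ 2 and suppose R ⊆ Ω ⊆ Q are subsets of ℝⁿ where R is a rectangular prism and Q = n^{3/2}·R is the dilation of R by factor n^{3/2} about its center, and Ω is a bounded convex domain. Then n^{-3n(n-1)/2} · |∂R|ⁿ/|R|^{n-1} ≤ |∂Ω|ⁿ/|Ω|^{n-1} ≤ n^{3n(n-1)/2} · |∂R|ⁿ/|R|^{n-1}. -/
/-!
The nearest-point map onto a closed convex set `A` with nonempty interior is 1-Lipschitz, and it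
maps the frontier of any bounded `B ⊇ A` onto the frontier of `A`: the outer normal ray at a
frontier point `y` of `A` starts in `B` and leaves it, so it crosses `∂B`, and every point of the
ray projects back to `y`. Hence surface area, like volume, is monotone along `R ⊆ Ω ⊆ Q`.
As `Q` is the image of `R` under the homothety of ratio `λ = n^{3/2}`, `|∂Q| = λ^{n-1} |∂R|` and
`|Q| = λ^n |R|`, and the two chains of inequalities pin the ratio `|∂Ω|^n / |Ω|^{n-1}` within
a factor `λ^{n(n-1)} = n^{3n(n-1)/2}` of that of `R`.
-/

open MeasureTheory Bornology Metric Set Module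
open scoped RealInnerProductSpace ENNReal NNReal

section NormedSpace

variable {E : Type*} [NormedAddCommGroup E] [NormedSpace ℝ E]

theorem Bornology.IsBounded.exists_nonneg_add_smul_mem_frontier {B : Set E} (hB : IsBounded B)
    {y v : E} (hy : y ∈ B) (hv : v ≠ 0) : ∃ t : ℝ, 0 ≤ t ∧ y + t • v ∈ frontier B := by
  set γ : ℝ≥0 → E := fun t => y + (t : ℝ) • v
  have hγ : Continuous γ := by fun_prop
  have hne : (γ ⁻¹' B).Nonempty := ⟨0, by simpa [γ] using hy⟩
  have hne_univ : γ ⁻¹' B ≠ univ := by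
    intro h
    obtain ⟨C, hC⟩ := isBounded_iff_forall_norm_le.1 hB
    have hC0 : 0 ≤ C := (norm_nonneg y).trans (hC y hy)
    have hv0 : 0 < ‖v‖ := norm_pos_iff.2 hv
    set t : ℝ≥0 := ⟨(C + ‖y‖ + 1) / ‖v‖, by positivity⟩
    have hγt : ‖γ t‖ ≤ C := hC _ (show t ∈ γ ⁻¹' B from h ▸ mem_univ t)
    have htv : ‖(t : ℝ) • v‖ = C + ‖y‖ + 1 := by
      rw [norm_smul, NNReal.norm_eq]; exact div_mul_cancel₀ _ hv0.ne'
    have := norm_sub_le (γ t) y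
    simp only [γ, add_sub_cancel_left] at this
    linarith
  -- `ℝ≥0` is connected, so the proper nonempty subset `γ ⁻¹' B` has a frontier point.
  obtain ⟨t, ht⟩ := nonempty_frontier_iff.2 ⟨hne, hne_univ⟩
  exact ⟨t, t.2, hγ.frontier_preimage_subset B ht⟩

theorem Convex.frontier_closure {A : Set E} (hA : Convex ℝ A) (hAi : (interior A).Nonempty) :
    frontier (closure A) = frontier A := by
  rw [frontier, closure_closure, hA.interior_closure_eq_interior_of_nonempty_interior hAi, frontier]

theorem AffineMap.isHomeomorph_homothety (x : E) {t : ℝ} (ht : t ≠ 0) :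
    IsHomeomorph (AffineMap.homothety x t) :=
  ⟨homothety_continuous x t, homothety_isOpenMap x t ht, by
    simpa using (AffineEquiv.homothetyUnitsMulHom x (Units.mk0 t ht)).bijective⟩

theorem hausdorffMeasure_frontier_homothety_image [MeasurableSpace E] [BorelSpace E] {d : ℝ}
    (hd : 0 ≤ d) (x : E) {t : ℝ} (ht : t ≠ 0) (s : Set E) :
    μH[d] (frontier (AffineMap.homothety x t '' s)) = ‖t‖₊ ^ d • μH[d] (frontier s) := by
  rw [← (AffineMap.isHomeomorph_homothety x ht).image_frontier,
    hausdorffMeasure_homothety_image hd x ht]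

end NormedSpace

section InnerProductSpace

variable {E : Type*} [NormedAddCommGroup E] [InnerProductSpace ℝ E]

theorem norm_sub_le_of_forall_inner_le_zero {A : Set E} {u u' p q : E} (hp : p ∈ A)
    (hq : q ∈ A) (hup : ∀ w ∈ A, ⟪u - p, w - p⟫ ≤ 0) (huq : ∀ w ∈ A, ⟪u' - q, w - q⟫ ≤ 0) :
    ‖p - q‖ ≤ ‖u - u'‖ := by
  have key : ‖p - q‖ ^ 2 ≤ ⟪u - u', p - q⟫ := by
    have h := add_nonpos (hup q hq) (huq p hp)
    rw [← real_inner_self_eq_norm_sq]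
    simp only [inner_sub_left, inner_sub_right, real_inner_comm] at h ⊢
    linarith
  nlinarith [real_inner_le_norm (u - u') (p - q), norm_nonneg (p - q), norm_nonneg (u - u')]

variable [CompleteSpace E]

theorem exists_lipschitzWith_one_nearestPoint {A : Set E} (hA : Convex ℝ A) (hAc : IsClosed A)
    (hne : A.Nonempty) :
    ∃ π : E → E, LipschitzWith 1 π ∧
      ∀ u, ∀ y ∈ A, (∀ w ∈ A, ⟪u - y, w - y⟫ ≤ 0) → π u = y := by
  have hex (u : E) : ∃ p ∈ A, ∀ w ∈ A, ⟪u - p, w - p⟫ ≤ 0 := by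
    obtain ⟨p, hp, hmin⟩ := exists_norm_eq_iInf_of_complete_convex hne hAc.isComplete hA u
    exact ⟨p, hp, (norm_eq_iInf_iff_real_inner_le_zero hA hp).1 hmin⟩
  choose π hπA hπ using hex
  refine ⟨π, LipschitzWith.of_dist_le_mul fun u u' => ?_, fun u y hy hyu => ?_⟩
  · simpa [dist_eq_norm] using
      norm_sub_le_of_forall_inner_le_zero (hπA u) (hπA u') (hπ u) (hπ u')
  · simpa [sub_eq_zero] using norm_sub_le_of_forall_inner_le_zero (hπA u) hy (hπ u) hyu

theorem Convex.exists_ne_zero_forall_inner_sub_le_zero {A : Set E} (hA : Convex ℝ A)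
    (hAi : (interior A).Nonempty) {y : E} (hy : y ∈ frontier A) :
    ∃ v ≠ 0, ∀ w ∈ A, ⟪v, w - y⟫ ≤ 0 := by
  obtain ⟨f, hf⟩ := geometric_hahn_banach_open_point hA.interior isOpen_interior hy.2
  have hfA : A ⊆ {w | f w ≤ f y} :=
    calc A ⊆ closure (interior A) := by
          rw [hA.closure_interior_eq_closure_of_nonempty_interior hAi]; exact subset_closure
      _ ⊆ {w | f w ≤ f y} :=
          closure_minimal (fun w hw => (hf w hw).le) (isClosed_le f.continuous continuous_const)
  set v := (InnerProductSpace.toDual ℝ E).symm f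
  have hv (z : E) : ⟪v, z⟫ = f z := InnerProductSpace.toDual_symm_apply
  refine ⟨v, ?_, fun w hw => by simpa [hv, inner_sub_right] using hfA hw⟩
  intro hv0
  obtain ⟨a, ha⟩ := hAi
  simpa [← hv, hv0] using hf a ha

variable [MeasurableSpace E] [BorelSpace E]

theorem Convex.hausdorffMeasure_frontier_le_of_isClosed {A B : Set E} (hA : Convex ℝ A)
    (hAc : IsClosed A) (hAi : (interior A).Nonempty) (hB : IsBounded B) (hAB : A ⊆ B)
    {d : ℝ} (hd : 0 ≤ d) : μH[d] (frontier A) ≤ μH[d] (frontier B) := by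
  obtain ⟨π, hπ, hπ_eq⟩ := exists_lipschitzWith_one_nearestPoint hA hAc (hAi.mono interior_subset)
  have hsurj : frontier A ⊆ π '' frontier B := by
    intro y hy
    have hyA : y ∈ A := hAc.frontier_subset hy
    obtain ⟨v, hv0, hv⟩ := hA.exists_ne_zero_forall_inner_sub_le_zero hAi hy
    obtain ⟨t, ht, hx⟩ := hB.exists_nonneg_add_smul_mem_frontier (hAB hyA) hv0
    refine ⟨_, hx, hπ_eq _ y hyA fun w hw => ?_⟩
    simpa [real_inner_smul_left] using mul_nonpos_of_nonneg_of_nonpos ht (hv w hw)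
  calc μH[d] (frontier A) ≤ μH[d] (π '' frontier B) := measure_mono hsurj
    _ ≤ μH[d] (frontier B) := by simpa using hπ.hausdorffMeasure_image_le hd (frontier B)

theorem Convex.hausdorffMeasure_frontier_le {A B : Set E} (hA : Convex ℝ A)
    (hAi : (interior A).Nonempty) (hB : IsBounded B) (hAB : closure A ⊆ B)
    {d : ℝ} (hd : 0 ≤ d) : μH[d] (frontier A) ≤ μH[d] (frontier B) := by
  rw [← hA.frontier_closure hAi]
  exact hA.closure.hausdorffMeasure_frontier_le_of_isClosed isClosed_closure
    (hAi.mono (interior_mono subset_closure)) hB hAB hd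

end InnerProductSpace

-- No finiteness hypothesis is needed: if `a = ⊤` then `b = ⊤` and all `toReal`s vanish.
theorem ENNReal.toReal_le_and_le_smul_of_le {a b : ℝ≥0∞} {k : ℝ≥0} (hab : a ≤ b)
    (hb : b ≤ k • a) : a.toReal ≤ b.toReal ∧ b.toReal ≤ k * a.toReal := by
  by_cases ha : a = ⊤
  · simp [ha, top_le_iff.1 (ha ▸ hab)]
  have hka : k • a ≠ ⊤ := by
    simpa [ENNReal.smul_def] using ENNReal.mul_ne_top ENNReal.coe_ne_top ha
  exact ⟨ENNReal.toReal_mono (ne_top_of_le_ne_top hka hb) hab, by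
    simpa [ENNReal.toReal_smul, NNReal.smul_def] using ENNReal.toReal_mono hka hb⟩

theorem pow_div_pow_pred_le_and_le {n : ℕ} {t s s' v v' : ℝ} (hs : 0 ≤ s) (hv : 0 < v)
    (hss' : s ≤ s') (hs't : s' ≤ t ^ (n - 1) * s) (hvv' : v ≤ v') (hv't : v' ≤ t ^ n * v) :
    (t ^ (n * (n - 1)))⁻¹ * (s ^ n / v ^ (n - 1)) ≤ s' ^ n / v' ^ (n - 1) ∧
      s' ^ n / v' ^ (n - 1) ≤ t ^ (n * (n - 1)) * (s ^ n / v ^ (n - 1)) := by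
  have hs' : 0 ≤ s' := hs.trans hss'
  have hv' : 0 < v' := hv.trans_le hvv'
  constructor
  · calc (t ^ (n * (n - 1)))⁻¹ * (s ^ n / v ^ (n - 1)) = s ^ n / (t ^ n * v) ^ (n - 1) := by
          rw [mul_pow, ← pow_mul]; field_simp
      _ ≤ s' ^ n / v' ^ (n - 1) :=
          div_le_div₀ (pow_nonneg hs' n) (pow_le_pow_left₀ hs hss' n) (pow_pos hv' _)
            (pow_le_pow_left₀ hv'.le hv't _)
  · calc s' ^ n / v' ^ (n - 1) ≤ (t ^ (n - 1) * s) ^ n / v ^ (n - 1) :=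
          div_le_div₀ (pow_nonneg (hs'.trans hs't) n) (pow_le_pow_left₀ hs' hs't n)
            (pow_pos hv _) (pow_le_pow_left₀ hv.le hvv' _)
      _ = t ^ (n * (n - 1)) * (s ^ n / v ^ (n - 1)) := by
          rw [mul_pow, ← pow_mul, mul_comm (n - 1), mul_div_assoc]

section IsoperimetricRatio

variable {E : Type*} [NormedAddCommGroup E] [InnerProductSpace ℝ E] [FiniteDimensional ℝ E]
  [MeasurableSpace E] [BorelSpace E]

noncomputable def isoperimetricRatio (μ : Measure E) (n : ℕ) (s : Set E) : ℝ :=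
  (μH[(n : ℝ) - 1] (frontier s)).toReal ^ n / (μ s).toReal ^ (n - 1)

theorem isoperimetricRatio_le_and_le_of_subset_homothety (μ : Measure E) [μ.IsAddHaarMeasure]
    {n : ℕ} (hE : finrank ℝ E = n) (hn : 0 < n) {A Ω : Set E} (hA : Convex ℝ A)
    (hAc : IsCompact A) (hAi : (interior A).Nonempty) (hΩ : Convex ℝ Ω) {x : E} {t : ℝ}
    (ht : 0 < t) (hAΩ : A ⊆ Ω) (hΩB : Ω ⊆ AffineMap.homothety x t '' A) :
    (t ^ (n * (n - 1)))⁻¹ * isoperimetricRatio μ n A ≤ isoperimetricRatio μ n Ω ∧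
      isoperimetricRatio μ n Ω ≤ t ^ (n * (n - 1)) * isoperimetricRatio μ n A := by
  set B := AffineMap.homothety x t '' A
  have hBc : IsCompact B := hAc.image (AffineMap.homothety_continuous x t)
  set d : ℝ := n - 1
  have hd : 0 ≤ d := by
    have : (1 : ℝ) ≤ n := by exact_mod_cast hn
    linarith
  have hSA : μH[d] (frontier A) ≤ μH[d] (frontier Ω) :=
    hA.hausdorffMeasure_frontier_le hAi (hBc.isBounded.subset hΩB)
      (hAc.isClosed.closure_eq.trans_subset hAΩ) hd
  have hSΩ : μH[d] (frontier Ω) ≤ ‖t‖₊ ^ d • μH[d] (frontier A) :=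
    (hΩ.hausdorffMeasure_frontier_le (hAi.mono (interior_mono hAΩ)) hBc.isBounded
      (closure_minimal hΩB hBc.isClosed) hd).trans_eq
      (hausdorffMeasure_frontier_homothety_image hd x ht.ne' A)
  have hVΩ : μ Ω ≤ (t ^ n).toNNReal • μ A := by
    refine (measure_mono hΩB).trans_eq ?_
    rw [μ.addHaar_image_homothety, hE, abs_of_pos (pow_pos ht n)]
    rfl
  have hS := ENNReal.toReal_le_and_le_smul_of_le hSA hSΩ
  have hV := ENNReal.toReal_le_and_le_smul_of_le (measure_mono hAΩ) hVΩ
  have hcoef : ((‖t‖₊ ^ d : ℝ≥0) : ℝ) = t ^ (n - 1) := by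
    rw [NNReal.coe_rpow, coe_nnnorm, Real.norm_of_nonneg ht.le,
      show d = ((n - 1 : ℕ) : ℝ) by rw [Nat.cast_pred hn], Real.rpow_natCast]
  rw [hcoef] at hS
  rw [Real.coe_toNNReal _ (pow_nonneg ht.le n)] at hV
  have hμA : 0 < (μ A).toReal :=
    ENNReal.toReal_pos (μ.measure_pos_of_nonempty_interior hAi).ne' hAc.measure_lt_top.ne
  exact pow_div_pow_pred_le_and_le ENNReal.toReal_nonneg hμA hS.1 hS.2 hV.1 hV.2

end IsoperimetricRatio

section Box

variable {ι : Type*} (c : EuclideanSpace ℝ ι) (b : ι → ℝ)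

def centeredBox : Set (EuclideanSpace ℝ ι) :=
  {x | ∀ i, |x i - c i| ≤ b i}

theorem centeredBox_eq_preimage :
    centeredBox c b = EuclideanSpace.equiv ι ℝ ⁻¹' univ.pi fun i => closedBall (c i) (b i) := by
  ext x
  simp [centeredBox, Real.dist_eq]

theorem convex_centeredBox : Convex ℝ (centeredBox c b) := by
  rw [centeredBox_eq_preimage]
  exact (convex_pi fun i _ => convex_closedBall (c i) (b i)).linear_preimage
    (EuclideanSpace.equiv ι ℝ).toLinearMap

theorem isCompact_centeredBox : IsCompact (centeredBox c b) := by
  rw [centeredBox_eq_preimage]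
  exact (EuclideanSpace.equiv ι ℝ).toHomeomorph.isCompact_preimage.2
    (isCompact_univ_pi fun i => isCompact_closedBall (c i) (b i))

variable [Fintype ι]

theorem center_mem_interior_centeredBox {b : ι → ℝ} (hb : ∀ i, 0 < b i) :
    c ∈ interior (centeredBox c b) := by
  rw [centeredBox_eq_preimage, mem_interior_iff_mem_nhds]
  exact (EuclideanSpace.equiv ι ℝ).continuous.continuousAt.preimage_mem_nhds
    (set_pi_mem_nhds finite_univ fun i _ => closedBall_mem_nhds (c i) (hb i))

theorem homothety_image_centeredBox {t : ℝ} (ht : 0 < t) :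
    AffineMap.homothety c t '' centeredBox c b = centeredBox c (t • b) := by
  have h := (AffineEquiv.homothetyUnitsMulHom c (Units.mk0 t ht.ne')).toEquiv.image_eq_preimage_symm
    (centeredBox c b)
  simp only [AffineEquiv.coe_toEquiv, AffineEquiv.coe_homothetyUnitsMulHom_apply,
    Units.val_mk0] at h
  rw [h]
  ext x
  simp [centeredBox, AffineMap.homothety_apply, abs_mul, abs_of_pos ht, inv_mul_le_iff₀ ht]

end Box

theorem rpow_three_halves_pow_mul_pred (n : ℕ) :
    ((n : ℝ) ^ ((3 : ℝ) / 2)) ^ (n * (n - 1)) = (n : ℝ) ^ (3 * n * (n - 1) / 2) := by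
  have h2 : 2 ∣ 3 * n * (n - 1) := by
    rw [mul_assoc]; exact (Nat.even_mul_pred_self n).two_dvd.mul_left 3
  rw [← Real.rpow_natCast _ (n * (n - 1)), ← Real.rpow_mul (Nat.cast_nonneg n),
    ← Real.rpow_natCast _ (3 * n * (n - 1) / 2), Nat.cast_div h2 two_ne_zero]
  push_cast
  ring_nf

theorem stmt1_general (n : ℕ) (hn : 2 ≤ n) (c : EuclideanSpace ℝ (Fin n)) (b : Fin n → ℝ)
    (hb : ∀ i, 0 < b i) (R Q Ω : Set (EuclideanSpace ℝ (Fin n)))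
    (hR : R = {x | ∀ i, |x i - c i| ≤ b i})
    (hQ : Q = {x | ∀ i, |x i - c i| ≤ (n : ℝ) ^ ((3 : ℝ) / 2) * b i})
    (hΩc : Convex ℝ Ω)
    (hRΩ : R ⊆ Ω) (hΩQ : Ω ⊆ Q) :
    ((n : ℝ) ^ (3 * n * (n - 1) / 2 : ℕ))⁻¹ *
        ((μH[((n : ℝ) - 1)] (frontier R)).toReal ^ n / (volume R).toReal ^ (n - 1))
      ≤ (μH[((n : ℝ) - 1)] (frontier Ω)).toReal ^ n / (volume Ω).toReal ^ (n - 1) ∧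
    (μH[((n : ℝ) - 1)] (frontier Ω)).toReal ^ n / (volume Ω).toReal ^ (n - 1)
      ≤ (n : ℝ) ^ (3 * n * (n - 1) / 2 : ℕ) *
        ((μH[((n : ℝ) - 1)] (frontier R)).toReal ^ n / (volume R).toReal ^ (n - 1)) := by
  have hn0 : 0 < n := by omega
  have ht : 0 < (n : ℝ) ^ ((3 : ℝ) / 2) := Real.rpow_pos_of_pos (by exact_mod_cast hn0) _
  have hΩ : Ω ⊆ AffineMap.homothety c ((n : ℝ) ^ ((3 : ℝ) / 2)) '' centeredBox c b := by
    rw [homothety_image_centeredBox c b ht]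
    exact hΩQ.trans hQ.subset
  subst hR
  rw [← rpow_three_halves_pow_mul_pred]
  exact isoperimetricRatio_le_and_le_of_subset_homothety volume finrank_euclideanSpace_fin hn0
    (convex_centeredBox c b) (isCompact_centeredBox c b) ⟨c, center_mem_interior_centeredBox c hb⟩
    hΩc ht hRΩ hΩ

/-- If `R ⊆ Ω ⊆ Q` with `R` a rectangular prism, `Q` its dilation about its
center by factor `n^{3/2}` and `Ω` a bounded convex domain, then the isoperimetric ratio of
`Ω` is within a factor `n^{3n(n-1)/2}` of that of `R`.  Here `|·|` is Lebesgue measure and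
`|∂·|` the `(n-1)`-dimensional Hausdorff measure of the frontier. -/
theorem stmt1 (n : ℕ) (hn : 2 ≤ n) (c : EuclideanSpace ℝ (Fin n)) (b : Fin n → ℝ)
    (hb : ∀ i, 0 < b i) (R Q Ω : Set (EuclideanSpace ℝ (Fin n)))
    (hR : R = {x | ∀ i, |x i - c i| ≤ b i})
    (hQ : Q = {x | ∀ i, |x i - c i| ≤ (n : ℝ) ^ ((3 : ℝ) / 2) * b i})
    (hΩo : IsOpen Ω) (hΩc : Convex ℝ Ω) (hΩb : IsBounded Ω)
    (hRΩ : R ⊆ Ω) (hΩQ : Ω ⊆ Q) :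
    ((n : ℝ) ^ (3 * n * (n - 1) / 2 : ℕ))⁻¹ *
        ((μH[((n : ℝ) - 1)] (frontier R)).toReal ^ n / (volume R).toReal ^ (n - 1))
      ≤ (μH[((n : ℝ) - 1)] (frontier Ω)).toReal ^ n / (volume Ω).toReal ^ (n - 1) ∧
    (μH[((n : ℝ) - 1)] (frontier Ω)).toReal ^ n / (volume Ω).toReal ^ (n - 1)
      ≤ (n : ℝ) ^ (3 * n * (n - 1) / 2 : ℕ) *
        ((μH[((n : ℝ) - 1)] (frontier R)).toReal ^ n / (volume R).toReal ^ (n - 1)) :=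
  stmt1_general n hn c b hb R Q Ω hR hQ hΩc hRΩ hΩQ
end

section
/- Let n ≥ 2 and let Ω ⊆ ℝⁿ be a bounded convex domain containing an ellipsoid J centered at the origin with axes along coordinate axes of lengths a_1 ≥ ... ≥ a_n > 0, such that Ω ⊆ Q where Q = ∏_{j=1}^n [-a_j·n, a_j·n]. Then |∂Ω| ≤ (2n)ⁿ/ω_{n-1} · A_{n-1}(Ω), where A_{n-1}(Ω) := sup over (n-1)-dimensional affine subspaces V of |Ω ∩ V|, and ω_{n-1} is the volume of the unit ball in ℝ^{n-1}. -/
/-! The metric projection onto the closed convex set `closure Ω` is 1-Lipschitz and maps `∂Q`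
onto `∂Ω`: at `x ∈ ∂Ω` take the outward normal `ν` of a supporting hyperplane; the ray `x + tν`,
`t ≥ 0`, leaves the bounded box `Q` through a point of `∂Q`, and that point projects back to `x`.
Hence `|∂Ω| ≤ |∂Q| = 2 ∑ᵢ ∏_{j ≠ i} 2aⱼn ≤ (2n)ⁿ a₁⋯a_{n-1}`, the last step because `aₙ ≤ aᵢ`.
On the other hand the section `Ω ∩ {xₙ = 0}` contains the central section of the ellipsoid, of
measure `ω_{n-1} a₁⋯a_{n-1}`.

Both sides scale in the same way when `μH` is replaced by the Euclidean Hausdorff measure `μHE`,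
which agrees with Lebesgue measure on `ℝ^{n-1}` and is invariant under isometries; all
computations are done with `μHE`. -/

open MeasureTheory Bornology Finset

open scoped ENNReal RealInnerProductSpace NNReal

section ConvexGeometry

variable {E : Type*} [NormedAddCommGroup E] [InnerProductSpace ℝ E]

theorem norm_sub_le_of_inner_sub_nonpos {y₁ y₂ v₁ v₂ : E}
    (h₁ : ⟪y₁ - v₁, v₂ - v₁⟫ ≤ 0) (h₂ : ⟪y₂ - v₂, v₁ - v₂⟫ ≤ 0) :
    ‖v₁ - v₂‖ ≤ ‖y₁ - y₂‖ := by
  have hsplit : ⟪y₁ - y₂, v₁ - v₂⟫ =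
      ‖v₁ - v₂‖ ^ 2 - ⟪y₁ - v₁, v₂ - v₁⟫ - ⟪y₂ - v₂, v₁ - v₂⟫ := by
    rw [← real_inner_self_eq_norm_sq, ← neg_sub v₁ v₂, inner_neg_right]
    simp only [inner_sub_left, inner_sub_right, real_inner_comm]
    ring
  by_contra! hlt
  nlinarith [real_inner_le_norm (y₁ - y₂) (v₁ - v₂), norm_nonneg (y₁ - y₂)]

theorem exists_lipschitzWith_one_retraction [CompleteSpace E] {K : Set E} (hne : K.Nonempty)
    (hK : Convex ℝ K) (hcl : IsClosed K) :
    ∃ p : E → E, LipschitzWith 1 p ∧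
      ∀ y x, x ∈ K → (∀ w ∈ K, ⟪y - x, w - x⟫ ≤ 0) → p y = x := by
  have hproj : ∀ y : E, ∃ v ∈ K, ∀ w ∈ K, ⟪y - v, w - v⟫ ≤ 0 := fun y => by
    obtain ⟨v, hv, hmin⟩ := exists_norm_eq_iInf_of_complete_convex hne hcl.isComplete hK y
    exact ⟨v, hv, (norm_eq_iInf_iff_real_inner_le_zero hK hv).1 hmin⟩
  choose p hpK hp using hproj
  refine ⟨p, LipschitzWith.of_dist_le_mul fun y₁ y₂ => ?_, fun y x hx hyx => ?_⟩
  · rw [NNReal.coe_one, one_mul, dist_eq_norm, dist_eq_norm]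
    exact norm_sub_le_of_inner_sub_nonpos (hp y₁ _ (hpK y₂)) (hp y₂ _ (hpK y₁))
  · simpa [sub_eq_zero] using norm_sub_le_of_inner_sub_nonpos (hp y x hx) (hyx _ (hpK y))

theorem exists_outward_normal_of_mem_frontier [CompleteSpace E] {Ω : Set E} (hΩo : IsOpen Ω)
    (hΩc : Convex ℝ Ω) {x : E} (hx : x ∈ frontier Ω) :
    ∃ ν : E, ν ≠ 0 ∧ ∀ w ∈ closure Ω, ⟪ν, w - x⟫ ≤ 0 := by
  have hxΩ : x ∉ Ω := fun h => hx.2 (by rwa [hΩo.interior_eq])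
  obtain ⟨f, hf⟩ := geometric_hahn_banach_open_point hΩc hΩo hxΩ
  set ν := (InnerProductSpace.toDual ℝ E).symm f
  have hν : ∀ z, ⟪ν, z⟫ = f z := fun z => InnerProductSpace.toDual_symm_apply (𝕜 := ℝ)
  have hfle : ∀ w ∈ closure Ω, f w ≤ f x :=
    closure_minimal (fun w hw => (hf w hw).le) (isClosed_le f.continuous continuous_const)
  refine ⟨ν, ?_, fun w hw => by rw [hν, map_sub]; linarith [hfle w hw]⟩
  rintro hν0
  obtain ⟨w, hw⟩ := closure_nonempty_iff.1 ⟨x, hx.1⟩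
  simpa [← hν, hν0] using hf w hw

theorem exists_add_smul_mem_frontier {Q : Set E} (hQ : IsBounded Q) {x v : E} (hx : x ∈ Q)
    (hv : v ≠ 0) : ∃ t : ℝ, 0 ≤ t ∧ x + t • v ∈ frontier Q := by
  obtain ⟨C, hC⟩ := isBounded_iff_forall_norm_le.1 hQ
  -- parametrised by `|t|`, the ray is defined on the preconnected space `ℝ`
  set ray : ℝ → E := fun t => x + |t| • v
  have hray : Continuous ray := by fun_prop
  have hexit : ray ((C + ‖x‖ + 1) / ‖v‖) ∉ Q := by
    intro hmem
    have hnorm : ‖|(C + ‖x‖ + 1) / ‖v‖| • v‖ = C + ‖x‖ + 1 := by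
      have hC0 : 0 ≤ C := (norm_nonneg x).trans (hC x hx)
      rw [norm_smul, Real.norm_eq_abs, abs_abs, abs_of_nonneg (by positivity),
        div_mul_cancel₀ _ (norm_ne_zero_iff.2 hv)]
    have := norm_sub_le (ray ((C + ‖x‖ + 1) / ‖v‖)) x
    simp only [ray, add_sub_cancel_left] at this
    linarith [hC _ hmem]
  obtain ⟨t, ht⟩ : (frontier (ray ⁻¹' Q)).Nonempty :=
    nonempty_frontier_iff.2
      ⟨⟨0, by simpa [ray] using hx⟩, fun h => hexit (Set.eq_univ_iff_forall.1 h _)⟩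
  exact ⟨|t|, abs_nonneg t, hray.frontier_preimage_subset Q ht⟩

theorem exists_lipschitzWith_one_frontier_subset_image_frontier [CompleteSpace E] {Ω Q : Set E}
    (hΩo : IsOpen Ω) (hΩc : Convex ℝ Ω) (hQ : IsBounded Q) (hΩQ : closure Ω ⊆ Q) :
    ∃ p : E → E, LipschitzWith 1 p ∧ frontier Ω ⊆ p '' frontier Q := by
  rcases Ω.eq_empty_or_nonempty with rfl | hne
  · exact ⟨id, LipschitzWith.id, by simp⟩
  obtain ⟨p, hp, hpx⟩ :=
    exists_lipschitzWith_one_retraction hne.closure hΩc.closure isClosed_closure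
  refine ⟨p, hp, fun x hx => ?_⟩
  obtain ⟨ν, hν, hνx⟩ := exists_outward_normal_of_mem_frontier hΩo hΩc hx
  obtain ⟨t, ht, htQ⟩ := exists_add_smul_mem_frontier hQ (hΩQ hx.1) hν
  refine ⟨x + t • ν, htQ, hpx _ _ hx.1 fun w hw => ?_⟩
  rw [add_sub_cancel_left, real_inner_smul_left]
  exact mul_nonpos_of_nonneg_of_nonpos ht (hνx w hw)

theorem euclideanHausdorffMeasure_frontier_le [CompleteSpace E] [MeasurableSpace E]
    [BorelSpace E] {Ω Q : Set E} (hΩo : IsOpen Ω) (hΩc : Convex ℝ Ω) (hQ : IsBounded Q)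
    (hΩQ : closure Ω ⊆ Q) (d : ℕ) :
    μHE[d] (frontier Ω) ≤ μHE[d] (frontier Q) := by
  obtain ⟨p, hp, hsub⟩ :=
    exists_lipschitzWith_one_frontier_subset_image_frontier hΩo hΩc hQ hΩQ
  simp only [Measure.euclideanHausdorffMeasure_def, Measure.smul_apply, ENNReal.smul_def,
    smul_eq_mul]
  refine mul_le_mul_right ?_ _
  calc μH[d] (frontier Ω) ≤ μH[d] (p '' frontier Q) := measure_mono hsub
    _ ≤ μH[d] (frontier Q) := by
      simpa using hp.hausdorffMeasure_image_le (Nat.cast_nonneg d) (frontier Q)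

end ConvexGeometry

theorem hausdorffMeasure_le_mul_of_euclideanHausdorffMeasure_le {X : Type*} [EMetricSpace X]
    [MeasurableSpace X] [BorelSpace X] {d : ℕ} {s t : Set X} {K : ℝ≥0∞}
    (h : μHE[d] s ≤ K * μHE[d] t) : μH[d] s ≤ K * μH[d] t := by
  simp only [Measure.euclideanHausdorffMeasure_def, Measure.smul_apply, ENNReal.smul_def,
    smul_eq_mul] at h
  rw [mul_left_comm] at h
  exact (ENNReal.mul_le_mul_iff_right (by simpa using
    Measure.addHaarScalarFactor_volume_hausdorffMeasure_ne_zero d) ENNReal.coe_ne_top).1 h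

section Coordinates

variable {ι : Type*}

def coordBox (r : ι → ℝ) : Set (EuclideanSpace ℝ ι) := {x | ∀ i, |x i| ≤ r i}

def ellipsoid [Fintype ι] (a : ι → ℝ) : Set (EuclideanSpace ℝ ι) :=
  {x | ∑ i, (x i / a i) ^ 2 < 1}

theorem isClosed_coordBox (r : ι → ℝ) : IsClosed (coordBox r) := by
  simp only [coordBox, Set.ofPred_forall]
  exact isClosed_iInter fun i => isClosed_le (by fun_prop) continuous_const

theorem coordBox_eq_preimage (r : ι → ℝ) :
    coordBox r = (MeasurableEquiv.toLp 2 (ι → ℝ)).symm ⁻¹'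
      Set.univ.pi fun i => Set.Icc (-r i) (r i) := by
  ext x
  simp only [coordBox, Set.mem_ofPred_eq, Set.mem_preimage, MeasurableEquiv.toLp_symm_apply,
    Set.mem_univ_pi, Set.mem_Icc, abs_le]

theorem isBounded_coordBox [Fintype ι] (r : ι → ℝ) : IsBounded (coordBox r) := by
  have hcpt := (isCompact_univ_pi fun i => isCompact_Icc (a := -r i) (b := r i)).image
    (PiLp.continuous_toLp 2 fun _ : ι => ℝ)
  refine hcpt.isBounded.subset fun x hx => ⟨x.ofLp, ?_, rfl⟩
  rwa [coordBox_eq_preimage] at hx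

theorem volume_coordBox [Fintype ι] (r : ι → ℝ) :
    volume (coordBox r) = ∏ i, ENNReal.ofReal (2 * r i) := by
  rw [coordBox_eq_preimage,
    (EuclideanSpace.volume_preserving_symm_measurableEquiv_toLp ι).measure_preimage
      (MeasurableSet.univ_pi fun _ => measurableSet_Icc).nullMeasurableSet, volume_pi_pi]
  simp only [Real.volume_Icc]
  ring_nf

theorem frontier_coordBox_subset [Fintype ι] (r : ι → ℝ) :
    frontier (coordBox r) ⊆ ⋃ i, {x ∈ coordBox r | |x i| = r i} := by
  intro x hx
  have hxQ : x ∈ coordBox r := (isClosed_coordBox r).closure_subset hx.1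
  by_contra hface
  simp only [Set.mem_iUnion, Set.mem_ofPred_eq, not_exists, not_and] at hface
  have hint : {y : EuclideanSpace ℝ ι | ∀ i, |y i| < r i} ⊆ interior (coordBox r) :=
    interior_maximal (fun y hy i => (hy i).le) (by
      simp only [Set.ofPred_forall]
      exact isOpen_iInter_of_finite fun i => isOpen_lt (by fun_prop) continuous_const)
  exact hx.2 (hint fun i => (hxQ i).lt_of_ne (hface i hxQ))

theorem ellipsoid_eq_image_ball [Fintype ι] [DecidableEq ι] {a : ι → ℝ}
    (ha : ∀ i, a i ≠ 0) :
    ellipsoid a = (Matrix.diagonal a).toLpLin 2 2 '' Metric.ball 0 1 := by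
  ext y
  rw [EuclideanSpace.ball_zero_eq _ zero_le_one]
  constructor
  · intro hy
    refine ⟨WithLp.toLp 2 fun i => y i / a i, by simpa [ellipsoid] using hy, ?_⟩
    ext i
    simp [Matrix.mulVec_diagonal, mul_div_cancel₀ _ (ha i)]
  · rintro ⟨x, hx, rfl⟩
    simpa [ellipsoid, Matrix.ofLp_toLpLin, Matrix.mulVec_diagonal, mul_div_cancel_left₀ _ (ha _)]
      using hx

theorem volume_ellipsoid [Fintype ι] {a : ι → ℝ} (ha : ∀ i, 0 < a i) :
    volume (ellipsoid a) =
      ENNReal.ofReal (∏ i, a i) * volume (Metric.ball (0 : EuclideanSpace ℝ ι) 1) := by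
  classical
  rw [ellipsoid_eq_image_ball fun i => (ha i).ne', Measure.addHaar_image_linearMap,
    LinearMap.det_toLpLin, Matrix.det_diagonal, abs_of_pos (prod_pos fun i _ => ha i)]

end Coordinates

section CoordinateHyperplanes

variable {m : ℕ}

def insertCoord (i : Fin (m + 1)) (c : ℝ) (x : EuclideanSpace ℝ (Fin m)) :
    EuclideanSpace ℝ (Fin (m + 1)) :=
  WithLp.toLp 2 (Fin.insertNth i c x.ofLp)

@[simp]
theorem insertCoord_apply_same (i : Fin (m + 1)) (c : ℝ) (x : EuclideanSpace ℝ (Fin m)) :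
    insertCoord i c x i = c := by
  simp [insertCoord]

@[simp]
theorem insertCoord_apply_succAbove (i : Fin (m + 1)) (c : ℝ) (x : EuclideanSpace ℝ (Fin m))
    (j : Fin m) : insertCoord i c x (i.succAbove j) = x j := by
  simp [insertCoord]

theorem sum_insertCoord (f : Fin (m + 1) → ℝ → ℝ) (i : Fin (m + 1)) (c : ℝ)
    (x : EuclideanSpace ℝ (Fin m)) :
    ∑ k, f k (insertCoord i c x k) = f i c + ∑ j, f (i.succAbove j) (x j) := by
  simp [Fin.sum_univ_succAbove _ i]

theorem isometry_insertCoord (i : Fin (m + 1)) (c : ℝ) : Isometry (insertCoord i c) := by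
  refine Isometry.of_dist_eq fun x y => ?_
  rw [EuclideanSpace.dist_eq, EuclideanSpace.dist_eq, Fin.sum_univ_succAbove _ i]
  simp

theorem insertCoord_removeNth (i : Fin (m + 1)) (x : EuclideanSpace ℝ (Fin (m + 1))) :
    insertCoord i (x i) (WithLp.toLp 2 (i.removeNth x.ofLp)) = x := by
  simp [insertCoord]

theorem coordBox_face_subset (r : Fin (m + 1) → ℝ) (i : Fin (m + 1)) :
    {x ∈ coordBox r | |x i| = r i} ⊆
      insertCoord i (r i) '' coordBox (fun j => r (i.succAbove j)) ∪
        insertCoord i (-r i) '' coordBox (fun j => r (i.succAbove j)) := by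
  rintro x ⟨hx, hxi⟩
  have hmem : WithLp.toLp 2 (i.removeNth x.ofLp) ∈ coordBox (fun j => r (i.succAbove j)) :=
    fun j => hx (i.succAbove j)
  rcases (abs_eq (hxi ▸ abs_nonneg _)).1 hxi with h | h
  · exact Or.inl ⟨_, hmem, by rw [← h, insertCoord_removeNth]⟩
  · exact Or.inr ⟨_, hmem, by rw [← h, insertCoord_removeNth]⟩

theorem euclideanHausdorffMeasure_coordBox_face_le (r : Fin (m + 1) → ℝ) (i : Fin (m + 1)) :
    μHE[m] {x ∈ coordBox r | |x i| = r i} ≤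
      2 * ∏ j, ENNReal.ofReal (2 * r (i.succAbove j)) := by
  refine (measure_mono (coordBox_face_subset r i)).trans ((measure_union_le _ _).trans ?_)
  rw [(isometry_insertCoord i _).euclideanHausdorffMeasure_image,
    (isometry_insertCoord i _).euclideanHausdorffMeasure_image,
    EuclideanSpace.euclideanHausdorffMeasure_eq_volume, volume_coordBox, two_mul]

theorem euclideanHausdorffMeasure_frontier_coordBox_le (r : Fin (m + 1) → ℝ) :
    μHE[m] (frontier (coordBox r)) ≤
      2 * ∑ i : Fin (m + 1), ∏ j, ENNReal.ofReal (2 * r (i.succAbove j)) := by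
  rw [mul_sum]
  exact (measure_mono (frontier_coordBox_subset r)).trans ((measure_iUnion_fintype_le _ _).trans
    (sum_le_sum fun i _ => euclideanHausdorffMeasure_coordBox_face_le r i))

noncomputable def coordHyperplane (i : Fin (m + 1)) :
    AffineSubspace ℝ (EuclideanSpace ℝ (Fin (m + 1))) :=
  (LinearMap.ker (EuclideanSpace.proj (𝕜 := ℝ) i).toLinearMap).toAffineSubspace

theorem finrank_direction_coordHyperplane (i : Fin (m + 1)) :
    Module.finrank ℝ (coordHyperplane i).direction = m := by
  have hproj : (EuclideanSpace.proj (𝕜 := ℝ) i).toLinearMap ≠ 0 :=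
    fun h => by simpa using LinearMap.congr_fun h (EuclideanSpace.single i 1)
  have := Module.Dual.finrank_ker_add_one_of_ne_zero hproj
  rw [finrank_euclideanSpace_fin] at this
  rw [coordHyperplane, Submodule.toAffineSubspace_direction]
  omega

theorem insertCoord_zero_mem_coordHyperplane (i : Fin (m + 1)) (x : EuclideanSpace ℝ (Fin m)) :
    insertCoord i 0 x ∈ coordHyperplane i := by
  simp [coordHyperplane, Submodule.mem_toAffineSubspace]

theorem insertCoord_zero_mem_ellipsoid {a : Fin (m + 1) → ℝ} (i : Fin (m + 1))
    {x : EuclideanSpace ℝ (Fin m)} (hx : x ∈ ellipsoid fun j => a (i.succAbove j)) :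
    insertCoord i 0 x ∈ ellipsoid a := by
  change ∑ k, (insertCoord i 0 x k / a k) ^ 2 < 1
  rw [sum_insertCoord (fun k t => (t / a k) ^ 2)]
  simpa [ellipsoid] using hx

theorem volume_ellipsoid_le_euclideanHausdorffMeasure_inter_coordHyperplane
    {a : Fin (m + 1) → ℝ} {Ω : Set (EuclideanSpace ℝ (Fin (m + 1)))}
    (hΩ : ellipsoid a ⊆ Ω) (i : Fin (m + 1)) :
    volume (ellipsoid fun j => a (i.succAbove j)) ≤ μHE[m] (Ω ∩ coordHyperplane i) := by
  rw [← EuclideanSpace.euclideanHausdorffMeasure_eq_volume,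
    ← (isometry_insertCoord i 0).euclideanHausdorffMeasure_image]
  exact measure_mono (Set.image_subset_iff.2 fun x hx =>
    ⟨hΩ (insertCoord_zero_mem_ellipsoid i hx), insertCoord_zero_mem_coordHyperplane i x⟩)

theorem prod_succAbove_le_prod_castSucc {a : Fin (m + 1) → ℝ} (ha : ∀ j, 0 < a j)
    {i : Fin (m + 1)} (hi : a (Fin.last m) ≤ a i) :
    ∏ j, a (i.succAbove j) ≤ ∏ j : Fin m, a j.castSucc := by
  have hprod : a i * ∏ j, a (i.succAbove j) = a (Fin.last m) * ∏ j : Fin m, a j.castSucc := by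
    rw [← Fin.prod_univ_succAbove a i, Fin.prod_univ_castSucc, mul_comm]
  refine le_of_mul_le_mul_left ?_ (ha i)
  rw [hprod]
  exact mul_le_mul_of_nonneg_right hi (prod_nonneg fun j _ => (ha _).le)

theorem euclideanHausdorffMeasure_frontier_coordBox_mul_le {a : Fin (m + 1) → ℝ}
    (ha : ∀ j, 0 < a j) (hlast : ∀ i, a (Fin.last m) ≤ a i) {c : ℝ} (hc : 0 ≤ c) :
    μHE[m] (frontier (coordBox fun i => a i * c)) ≤
      ENNReal.ofReal (2 * (m + 1) * ((2 * c) ^ m * ∏ j : Fin m, a j.castSucc)) := by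
  have hface : ∀ i : Fin (m + 1), ∏ j, ENNReal.ofReal (2 * (a (i.succAbove j) * c)) ≤
      ENNReal.ofReal ((2 * c) ^ m * ∏ j : Fin m, a j.castSucc) := fun i => by
    rw [← ENNReal.ofReal_prod_of_nonneg fun j _ => by have := ha (i.succAbove j); positivity]
    refine ENNReal.ofReal_le_ofReal ?_
    calc ∏ j, 2 * (a (i.succAbove j) * c) = (2 * c) ^ m * ∏ j, a (i.succAbove j) := by
          rw [← Fin.prod_const, ← prod_mul_distrib]
          exact prod_congr rfl fun j _ => by ring
      _ ≤ (2 * c) ^ m * ∏ j : Fin m, a j.castSucc :=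
          mul_le_mul_of_nonneg_left (prod_succAbove_le_prod_castSucc ha (hlast i)) (by positivity)
  calc μHE[m] (frontier (coordBox fun i => a i * c))
      ≤ 2 * ∑ i : Fin (m + 1), ∏ j, ENNReal.ofReal (2 * (a (i.succAbove j) * c)) :=
        euclideanHausdorffMeasure_frontier_coordBox_le _
    _ ≤ 2 * ∑ _i : Fin (m + 1), ENNReal.ofReal ((2 * c) ^ m * ∏ j : Fin m, a j.castSucc) := by
        gcongr with i
        exact hface i
    _ = ENNReal.ofReal (2 * (m + 1) * ((2 * c) ^ m * ∏ j : Fin m, a j.castSucc)) := by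
        rw [sum_const, card_univ, Fintype.card_fin, nsmul_eq_mul, ← mul_assoc,
          ENNReal.ofReal_mul (p := 2 * ((m : ℝ) + 1)) (by positivity),
          show 2 * ((m : ℝ) + 1) = ((2 * (m + 1) : ℕ) : ℝ) by push_cast; ring,
          ENNReal.ofReal_natCast]
        push_cast
        rfl

end CoordinateHyperplanes

theorem stmt3_general (n : ℕ) (hn : 2 ≤ n) (Ω : Set (EuclideanSpace ℝ (Fin n)))
    (hΩo : IsOpen Ω) (hΩc : Convex ℝ Ω)
    (a : Fin n → ℝ) (ha : ∀ i, 0 < a i) (hmono : ∀ i j : Fin n, i ≤ j → a j ≤ a i)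
    (hJΩ : {x : EuclideanSpace ℝ (Fin n) | ∑ i, (x i / a i) ^ 2 < 1} ⊆ Ω)
    (hΩQ : Ω ⊆ {x : EuclideanSpace ℝ (Fin n) | ∀ i, |x i| ≤ a i * n}) :
    μH[((n : ℝ) - 1)] (frontier Ω) ≤
      ENNReal.ofReal ((2 * n : ℝ) ^ n /
          (volume (Metric.ball (0 : EuclideanSpace ℝ (Fin (n - 1))) 1)).toReal) *
        ⨆ (V : AffineSubspace ℝ (EuclideanSpace ℝ (Fin n)))
          (_ : Module.finrank ℝ V.direction = n - 1),
          μH[((n : ℝ) - 1)] (Ω ∩ (V : Set (EuclideanSpace ℝ (Fin n)))) := by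
  obtain ⟨m, rfl⟩ : ∃ m, n = m + 1 := ⟨n - 1, by omega⟩
  rw [show ((m + 1 : ℕ) : ℝ) - 1 = m by push_cast; ring, Nat.add_sub_cancel]
  set N : ℝ := ((m + 1 : ℕ) : ℝ)
  set Y := ∏ j : Fin m, a j.castSucc
  set ω := (volume (Metric.ball (0 : EuclideanSpace ℝ (Fin m)) 1)).toReal
  have hω : 0 < ω :=
    ENNReal.toReal_pos (Metric.measure_ball_pos _ _ one_pos).ne' measure_ball_lt_top.ne
  have hboundary : μHE[m] (frontier Ω) ≤ ENNReal.ofReal ((2 * N) ^ (m + 1) * Y) := by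
    refine (euclideanHausdorffMeasure_frontier_le hΩo hΩc (isBounded_coordBox _)
      (closure_minimal hΩQ (isClosed_coordBox _)) m).trans
      ((euclideanHausdorffMeasure_frontier_coordBox_mul_le ha
        (fun i => hmono i _ (Fin.le_last i)) (Nat.cast_nonneg _)).trans_eq ?_)
    congr 1
    simp only [N]
    push_cast
    ring
  have hsection : ENNReal.ofReal Y * ENNReal.ofReal ω ≤
      μHE[m] (Ω ∩ coordHyperplane (Fin.last m)) := by
    rw [ENNReal.ofReal_toReal measure_ball_lt_top.ne, ← volume_ellipsoid fun j => ha _]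
    simpa using volume_ellipsoid_le_euclideanHausdorffMeasure_inter_coordHyperplane hJΩ (Fin.last m)
  have hkey : μHE[m] (frontier Ω) ≤
      ENNReal.ofReal ((2 * N) ^ (m + 1) / ω) * μHE[m] (Ω ∩ coordHyperplane (Fin.last m)) :=
    calc μHE[m] (frontier Ω) ≤ ENNReal.ofReal ((2 * N) ^ (m + 1) * Y) := hboundary
      _ = ENNReal.ofReal ((2 * N) ^ (m + 1) / ω) * (ENNReal.ofReal Y * ENNReal.ofReal ω) := by
        rw [← ENNReal.ofReal_mul (prod_pos fun j _ => ha _ : 0 < Y).le,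
          ← ENNReal.ofReal_mul (by positivity)]
        rw [mul_comm Y, ← mul_assoc, div_mul_cancel₀ _ hω.ne']
      _ ≤ _ := mul_le_mul_right hsection _
  refine (hausdorffMeasure_le_mul_of_euclideanHausdorffMeasure_le hkey).trans
    (mul_le_mul_right ?_ _)
  exact le_iSup₂_of_le (coordHyperplane (Fin.last m)) (finrank_direction_coordHyperplane _) le_rfl

/-- If the bounded convex domain `Ω ⊆ ℝⁿ` contains the origin-centered
ellipsoid with semi-axes `a₁ ≥ ... ≥ aₙ > 0` along the coordinate axes and is contained in
the box `Q = ∏ⱼ [-aⱼn, aⱼn]`, then `|∂Ω| ≤ (2n)ⁿ/ω_{n-1} · A_{n-1}(Ω)`, where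
`A_{n-1}(Ω)` is the supremum of the `(n-1)`-dimensional Hausdorff measures of the
intersections of `Ω` with `(n-1)`-dimensional affine subspaces, and `ω_{n-1}` is the volume
of the unit ball in `ℝ^{n-1}`. -/
theorem stmt3 (n : ℕ) (hn : 2 ≤ n) (Ω : Set (EuclideanSpace ℝ (Fin n)))
    (hΩo : IsOpen Ω) (hΩc : Convex ℝ Ω) (hΩb : IsBounded Ω)
    (a : Fin n → ℝ) (ha : ∀ i, 0 < a i) (hmono : ∀ i j : Fin n, i ≤ j → a j ≤ a i)
    (hJΩ : {x : EuclideanSpace ℝ (Fin n) | ∑ i, (x i / a i) ^ 2 < 1} ⊆ Ω)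
    (hΩQ : Ω ⊆ {x : EuclideanSpace ℝ (Fin n) | ∀ i, |x i| ≤ a i * n}) :
    μH[((n : ℝ) - 1)] (frontier Ω) ≤
      ENNReal.ofReal ((2 * n : ℝ) ^ n /
          (volume (Metric.ball (0 : EuclideanSpace ℝ (Fin (n - 1))) 1)).toReal) *
        ⨆ (V : AffineSubspace ℝ (EuclideanSpace ℝ (Fin n)))
          (_ : Module.finrank ℝ V.direction = n - 1),
          μH[((n : ℝ) - 1)] (Ω ∩ (V : Set (EuclideanSpace ℝ (Fin n)))) :=
  stmt3_general n hn Ω hΩo hΩc a ha hmono hJΩ hΩQ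
end

section
/- Let g(x) = √(1-x²) and f_k(x) = (1/k)(1+cos(k²πx)) for an integer k ≥ 2, and let Ω_k = {(x,y) : -1 < x < 1, -g(x) < y < g(x) + f_k(x)}. Then the arc length of the curve y = g(x) + f_k(x) over (-1,1) is at least 2k. In particular, the perimeter |∂Ω_k| ≥ 2k, so |∂Ω_k|/√|Ω_k| → ∞ as k → ∞ while Ω_k ⊆ the disk of radius 3 (so areas are uniformly bounded). -/
/-!
Projecting the graph curve to its second coordinate does not increase variation, and variation
is subadditive, so `V(g + f_k) ≥ V(f_k) - V(g)`. Since `g` increases on `[-1, 0]` and decreases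
on `[0, 1]`, `V(g) ≤ 2`. Sampling `f_k` at the points `j / k²` (`|j| < k²`), where
`cos (k² π x) = ±1` alternately, gives `2k² - 2` jumps of size `2 / k`, so `V(f_k) ≥ 4k - 4/k`,
which is at least `2k + 2` for `k ≥ 2`.
-/

open Real Set ENNReal

namespace eVariationOn

variable {α E : Type*} [LinearOrder α]

theorem add_le [SeminormedAddCommGroup E] (f g : α → E) (s : Set α) :
    eVariationOn (f + g) s ≤ eVariationOn f s + eVariationOn g s := by
  refine iSup_le fun ⟨n, u, hu, us⟩ => ?_
  calc ∑ i ∈ Finset.range n, edist ((f + g) (u (i + 1))) ((f + g) (u i))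
      ≤ ∑ i ∈ Finset.range n,
          (edist (f (u (i + 1))) (f (u i)) + edist (g (u (i + 1))) (g (u i))) :=
        Finset.sum_le_sum fun i _ => edist_add_add_le _ _ _ _
    _ ≤ eVariationOn f s + eVariationOn g s := by
        rw [Finset.sum_add_distrib]
        exact add_le_add (sum_le hu us) (sum_le hu us)

theorem neg [SeminormedAddCommGroup E] (f : α → E) (s : Set α) :
    eVariationOn (-f) s = eVariationOn f s := by
  simp only [eVariationOn, Pi.neg_apply, edist_neg_neg]

theorem le_add_add [SeminormedAddCommGroup E] (f g : α → E) (s : Set α) :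
    eVariationOn f s ≤ eVariationOn (g + f) s + eVariationOn g s := by
  simpa [neg] using add_le (g + f) (-g) s

theorem le_graph [PseudoEMetricSpace α] [PseudoEMetricSpace E] (f : α → E) (s : Set α) :
    eVariationOn f s ≤ eVariationOn (fun x => (x, f x)) s := by
  have := (LipschitzWith.prod_snd (α := α) (β := E)).lipschitzOnWith.comp_eVariationOn_le
    (g := fun x => (x, f x)) (mapsTo_univ _ s)
  rwa [ENNReal.coe_one, one_mul] at this

theorem natCast_mul_le_of_le_edist [PseudoEMetricSpace E] {f : α → E} {s : Set α} {u : ℕ → α}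
    {n : ℕ} {δ : ℝ≥0∞} (hu : MonotoneOn u (Iic n)) (us : ∀ i ≤ n, u i ∈ s)
    (hδ : ∀ i < n, δ ≤ edist (f (u (i + 1))) (f (u i))) :
    n * δ ≤ eVariationOn f s :=
  calc (n : ℝ≥0∞) * δ = ∑ _i ∈ Finset.range n, δ := by simp
    _ ≤ ∑ i ∈ Finset.range n, edist (f (u (i + 1))) (f (u i)) :=
        Finset.sum_le_sum fun i hi => hδ i (Finset.mem_range.1 hi)
    _ ≤ eVariationOn f s := sum_le_of_monotoneOn_Iic hu us

end eVariationOn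

theorem AntitoneOn.eVariationOn_eq {α : Type*} [LinearOrder α] {f : α → ℝ} {s : Set α} {a b : α}
    (hf : AntitoneOn f s) (as : a ∈ s) (bs : b ∈ s) :
    eVariationOn f (s ∩ Icc a b) = .ofReal (f a - f b) := by
  rw [← eVariationOn.neg]
  exact (hf.neg.eVariationOn_eq as bs).trans (by rw [neg_sub_neg])

theorem eVariationOn_Icc_le_of_monotoneOn_of_antitoneOn {α : Type*} [LinearOrder α] {f : α → ℝ}
    {a b c : α} (hac : a ≤ c) (hcb : c ≤ b) (hmono : MonotoneOn f (Icc a c))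
    (hanti : AntitoneOn f (Icc c b)) :
    eVariationOn f (Icc a b) ≤ .ofReal (f c - f a) + .ofReal (f c - f b) := by
  have hc : c ∈ Icc a b := ⟨hac, hcb⟩
  rw [← inter_self (Icc a b), ← eVariationOn.Icc_add_Icc f hac hcb hc]
  gcongr
  · exact (eVariationOn.mono f (s := _ ∩ _) fun x hx => ⟨hx.2, hx.2⟩).trans
      (hmono.eVariationOn_eq (left_mem_Icc.2 hac) (right_mem_Icc.2 hac)).le
  · exact (eVariationOn.mono f (s := _ ∩ _) fun x hx => ⟨hx.2, hx.2⟩).trans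
      (hanti.eVariationOn_eq (left_mem_Icc.2 hcb) (right_mem_Icc.2 hcb)).le

theorem eVariationOn_sqrt_one_sub_sq_le :
    eVariationOn (fun x : ℝ => √(1 - x ^ 2)) (Ioo (-1) 1) ≤ 2 := by
  have hmono : MonotoneOn (fun x : ℝ => √(1 - x ^ 2)) (Icc (-1) 0) :=
    fun a _ b hb hab => sqrt_le_sqrt (by nlinarith [hb.2])
  have hanti : AntitoneOn (fun x : ℝ => √(1 - x ^ 2)) (Icc 0 1) :=
    fun a ha b _ hab => sqrt_le_sqrt (by nlinarith [ha.1])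
  calc eVariationOn (fun x : ℝ => √(1 - x ^ 2)) (Ioo (-1) 1)
      ≤ eVariationOn (fun x : ℝ => √(1 - x ^ 2)) (Icc (-1) 1) :=
        eVariationOn.mono _ Ioo_subset_Icc_self
    _ ≤ _ := eVariationOn_Icc_le_of_monotoneOn_of_antitoneOn (by norm_num) (by norm_num) hmono hanti
    _ = 2 := by norm_num

/-- The perturbation `f_k`. -/
noncomputable def ripple (k : ℕ) (x : ℝ) : ℝ := 1 / k * (1 + cos (k ^ 2 * π * x))

theorem ripple_le (k : ℕ) (x : ℝ) : ripple k x ≤ 2 / k := by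
  have := cos_le_one (k ^ 2 * π * x)
  rw [ripple, div_eq_mul_one_div 2]
  nlinarith [one_div_nonneg.2 (Nat.cast_nonneg (α := ℝ) k)]

theorem abs_ripple_sub (k : ℕ) (hk : 0 < k) (j : ℤ) :
    |ripple k ((j + 1 : ℤ) / k ^ 2) - ripple k (j / k ^ 2)| = 2 / k := by
  have harg (m : ℤ) : (k : ℝ) ^ 2 * π * (m / k ^ 2) = m * π := by field_simp
  have hcos : cos ((j + 1 : ℤ) * π) = -cos (j * π) := by
    push_cast; rw [add_mul, one_mul, cos_add_pi]
  rw [ripple, ripple, harg, harg, hcos,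
    show 1 / (k : ℝ) * (1 + -cos (j * π)) - 1 / k * (1 + cos (j * π)) = -(2 / k) * cos (j * π) by
      ring, abs_mul, abs_cos_int_mul_pi, abs_neg, mul_one, abs_of_pos (by positivity)]

theorem ofReal_le_eVariationOn_ripple (k : ℕ) (hk : 0 < k) :
    ENNReal.ofReal (4 * k - 4 / k) ≤ eVariationOn (ripple k) (Ioo (-1) 1) := by
  have hk2 : 1 ≤ k ^ 2 := Nat.one_le_pow _ _ hk
  set n := 2 * (k ^ 2 - 1)
  set u : ℕ → ℝ := fun i => ((i + 1 - k ^ 2 : ℤ) : ℝ) / k ^ 2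
  have hu : MonotoneOn u (Iic n) := fun i _ j _ hij => by simp only [u]; gcongr
  have us : ∀ i ≤ n, u i ∈ Ioo (-1) 1 := by
    intro i hi
    have hi' : (i : ℝ) ≤ 2 * (k ^ 2 - 1) := by exact_mod_cast hi
    simp only [u, mem_Ioo]
    push_cast
    constructor
    · rw [lt_div_iff₀ (by positivity)]; linarith [(Nat.cast_nonneg i : (0 : ℝ) ≤ i)]
    · rw [div_lt_iff₀ (by positivity)]; linarith
  have hstep : ∀ i < n, ENNReal.ofReal (2 / k) ≤ edist (ripple k (u (i + 1))) (ripple k (u i)) := by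
    intro i _
    have hu_succ : u (i + 1) = (((i + 1 - k ^ 2 : ℤ) + 1 : ℤ) : ℝ) / k ^ 2 := by
      simp only [u]; push_cast; ring
    rw [edist_dist, Real.dist_eq, hu_succ, abs_ripple_sub k hk]
  calc ENNReal.ofReal (4 * k - 4 / k) = n * ENNReal.ofReal (2 / k) := by
        rw [← ENNReal.ofReal_natCast, ← ENNReal.ofReal_mul (Nat.cast_nonneg _)]
        congr 1
        push_cast [n, Nat.cast_sub hk2]
        field_simp
        ring
    _ ≤ eVariationOn (ripple k) (Ioo (-1) 1) := eVariationOn.natCast_mul_le_of_le_edist hu us hstep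

/-- With `g(x)=√(1-x²)`, `f_k(x)=(1/k)(1+cos(k²πx))` and
`Ω_k = {(x,y) : -1 < x < 1, -g(x) < y < g(x)+f_k(x)}` (for `k ≥ 2`), the arc length of the
upper boundary curve `y = g(x)+f_k(x)` over `(-1,1)` is at least `2k`; moreover
`Ω_k` is contained in the disk of radius `3` (so the areas are uniformly bounded while
`|∂Ω_k|/√|Ω_k| → ∞`). -/
theorem stmt8 (k : ℕ) (hk : 2 ≤ k) (g f : ℝ → ℝ)
    (hg : ∀ x, g x = Real.sqrt (1 - x ^ 2))
    (hf : ∀ x, f x = (1 / k) * (1 + Real.cos (k ^ 2 * π * x)))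
    (Ω : Set (ℝ × ℝ))
    (hΩ : Ω = {p : ℝ × ℝ | p.1 ∈ Ioo (-1 : ℝ) 1 ∧ p.2 ∈ Ioo (-g p.1) (g p.1 + f p.1)}) :
    ((2 * k : ℕ) : ℝ≥0∞) ≤ eVariationOn (fun x : ℝ => (x, g x + f x)) (Ioo (-1 : ℝ) 1) ∧
    Ω ⊆ Metric.ball (0 : ℝ × ℝ) 3 := by
  obtain rfl : g = fun x => √(1 - x ^ 2) := funext hg
  obtain rfl : f = ripple k := funext hf
  have hkR : (2 : ℝ) ≤ k := by exact_mod_cast hk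
  subst hΩ
  refine ⟨?_, ?_⟩
  · have hcount : ((2 * k : ℕ) : ℝ≥0∞) + 2 ≤ ENNReal.ofReal (4 * k - 4 / k) := by
      have h4 : 4 / (k : ℝ) ≤ 2 * k - 2 := by
        rw [div_le_iff₀ (by positivity)]; nlinarith
      rw [show ((2 * k : ℕ) : ℝ≥0∞) + 2 = ((2 * k + 2 : ℕ) : ℝ≥0∞) by push_cast; rfl,
        ← ENNReal.ofReal_natCast]
      exact ofReal_le_ofReal (by push_cast; linarith)
    refine ENNReal.le_of_add_le_add_right (ofNat_ne_top (n := 2)) ?_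
    calc ((2 * k : ℕ) : ℝ≥0∞) + 2 ≤ eVariationOn (ripple k) (Ioo (-1) 1) :=
          hcount.trans (ofReal_le_eVariationOn_ripple k (by omega))
      _ ≤ eVariationOn (fun x => √(1 - x ^ 2) + ripple k x) (Ioo (-1) 1) +
            eVariationOn (fun x : ℝ => √(1 - x ^ 2)) (Ioo (-1) 1) :=
          eVariationOn.le_add_add _ _ _
      _ ≤ _ := add_le_add (eVariationOn.le_graph _ _) eVariationOn_sqrt_one_sub_sq_le
  · rintro ⟨x, y⟩ ⟨⟨hx₁, hx₂⟩, hy₁, hy₂⟩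
    have hsqrt : √(1 - x ^ 2) ≤ 1 := sqrt_le_one.2 (by nlinarith)
    have hripple : ripple k x ≤ 1 := (ripple_le k x).trans ((div_le_one (by positivity)).2 hkR)
    rw [Metric.mem_ball, Prod.dist_eq]
    simp only [Prod.fst_zero, Prod.snd_zero, Real.dist_0_eq_abs]
    exact max_lt (abs_lt.2 ⟨by linarith, by linarith⟩) (abs_lt.2 ⟨by linarith, by linarith⟩)
end

section
/- Let T ⊆ ℝ² be the open triangle with vertices (-1,0), (0,0), (0,1). Then u(x,y) = sin(π(x+1))·sin(2πy) − sin(2π(x+1))·sin(πy) satisfies −Δu = 5π²·u in T, u = 0 on ∂T, and u > 0 in T. Consequently the first Dirichlet eigenvalue of T is λ₁(T) = 5π². -/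
/-!
The function `u` is the difference of the two Dirichlet eigenfunctions `sin(π(x+1)) sin(2πy)`
and `sin(2π(x+1)) sin(πy)` of the square `(-1,0) × (0,1)`, both with eigenvalue `π² + 4π² = 5π²`.
It is antisymmetric under the reflection `(x+1, y) ↦ (y, x+1)` in the hypotenuse, so it vanishes
there as well as on the legs. The factorisation
`u = 2 sin(π(x+1)) sin(πy) (cos(πy) − cos(π(x+1)))`
shows `u > 0` on the triangle, where `0 < y < x+1 < 1` and `cos` is decreasing on `[0, π]`.
-/

open Real Set

/-- The Laplacian of a function on `ℝ²`, as the sum of the two unmixed second partial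
derivatives. -/
noncomputable def lap2 (v : ℝ × ℝ → ℝ) (p : ℝ × ℝ) : ℝ :=
  iteratedDeriv 2 (fun x => v (x, p.2)) p.1 + iteratedDeriv 2 (fun y => v (p.1, y)) p.2

lemma iteratedDeriv_two_sin_const_mul (a x : ℝ) :
    iteratedDeriv 2 (fun x => sin (a * x)) x = -a ^ 2 * sin (a * x) := by
  rw [iteratedDeriv_comp_const_mul contDiff_sin]
  simp [iteratedDeriv_succ]

lemma iteratedDeriv_two_sin_const_mul_add (a b x : ℝ) :
    iteratedDeriv 2 (fun x => sin (a * (x + b))) x = -a ^ 2 * sin (a * (x + b)) := by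
  rw [iteratedDeriv_comp_add_const 2 (fun x => sin (a * x))]
  exact iteratedDeriv_two_sin_const_mul a (x + b)

lemma lap2_sub {v w : ℝ × ℝ → ℝ} (hv : ContDiff ℝ 2 v) (hw : ContDiff ℝ 2 w) (p : ℝ × ℝ) :
    lap2 (fun q => v q - w q) p = lap2 v p - lap2 w p := by
  have slice {f : ℝ × ℝ → ℝ} (hf : ContDiff ℝ 2 f) (c : ℝ) :
      ContDiff ℝ 2 (fun x => f (x, c)) ∧ ContDiff ℝ 2 (fun y => f (c, y)) :=
    ⟨hf.comp (contDiff_id.prodMk contDiff_const), hf.comp (contDiff_const.prodMk contDiff_id)⟩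
  unfold lap2
  rw [iteratedDeriv_fun_sub ((slice hv p.2).1.contDiffAt) ((slice hw p.2).1.contDiffAt),
    iteratedDeriv_fun_sub ((slice hv p.1).2.contDiffAt) ((slice hw p.1).2.contDiffAt)]
  ring

lemma lap2_mul_separable (f g : ℝ → ℝ) (p : ℝ × ℝ) :
    lap2 (fun q => f q.1 * g q.2) p
      = iteratedDeriv 2 f p.1 * g p.2 + f p.1 * iteratedDeriv 2 g p.2 := by
  simp only [lap2, iteratedDeriv_mul_const_field, iteratedDeriv_const_mul_field]

def triangle : Set (ℝ × ℝ) := {p | -1 < p.1 ∧ p.1 < 0 ∧ 0 < p.2 ∧ p.2 < p.1 + 1}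

noncomputable def triangleEigenfunction (p : ℝ × ℝ) : ℝ :=
  sin (π * (p.1 + 1)) * sin (2 * π * p.2) - sin (2 * π * (p.1 + 1)) * sin (π * p.2)

lemma contDiff_triangleEigenfunction : ContDiff ℝ 2 triangleEigenfunction := by
  unfold triangleEigenfunction
  fun_prop

lemma neg_lap2_triangleEigenfunction (p : ℝ × ℝ) :
    -lap2 triangleEigenfunction p = 5 * π ^ 2 * triangleEigenfunction p := by
  have hsep {a b : ℝ} : ContDiff ℝ 2 (fun q : ℝ × ℝ => sin (a * (q.1 + 1)) * sin (b * q.2)) := by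
    fun_prop
  unfold triangleEigenfunction
  rw [lap2_sub hsep hsep, lap2_mul_separable (fun x => sin (π * (x + 1))) (fun y => sin (2 * π * y)),
    lap2_mul_separable (fun x => sin (2 * π * (x + 1))) (fun y => sin (π * y))]
  simp only [iteratedDeriv_two_sin_const_mul, iteratedDeriv_two_sin_const_mul_add]
  ring

lemma isOpen_triangle : IsOpen triangle :=
  (isOpen_lt continuous_const continuous_fst).inter
    ((isOpen_lt continuous_fst continuous_const).inter
    ((isOpen_lt continuous_const continuous_snd).inter
    (isOpen_lt continuous_snd (continuous_fst.add continuous_const))))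

lemma closure_triangle_subset :
    closure triangle ⊆ {p : ℝ × ℝ | -1 ≤ p.1 ∧ p.1 ≤ 0 ∧ 0 ≤ p.2 ∧ p.2 ≤ p.1 + 1} := by
  refine closure_minimal (fun p hp => ⟨hp.1.le, hp.2.1.le, hp.2.2.1.le, hp.2.2.2.le⟩) ?_
  exact (isClosed_le continuous_const continuous_fst).inter
    ((isClosed_le continuous_fst continuous_const).inter
    ((isClosed_le continuous_const continuous_snd).inter
    (isClosed_le continuous_snd (continuous_fst.add continuous_const))))

lemma frontier_triangle_subset :
    frontier triangle ⊆ {p : ℝ × ℝ | p.2 = 0 ∨ p.2 = p.1 + 1 ∨ p.1 = 0} := by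
  rintro p ⟨hp_closure, hp_not_interior⟩
  obtain ⟨h1, h2, h3, h4⟩ := closure_triangle_subset hp_closure
  rw [isOpen_triangle.interior_eq] at hp_not_interior
  show p.2 = 0 ∨ p.2 = p.1 + 1 ∨ p.1 = 0
  by_contra! h
  exact hp_not_interior ⟨by linarith [h3.lt_of_ne' h.1], h2.lt_of_ne h.2.2,
    h3.lt_of_ne' h.1, h4.lt_of_ne h.2.1⟩

lemma triangleEigenfunction_eq_zero_of_mem_frontier {p : ℝ × ℝ} (hp : p ∈ frontier triangle) :
    triangleEigenfunction p = 0 := by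
  obtain ⟨x, y⟩ := p
  rcases frontier_triangle_subset hp with hy | hxy | hx
  · simp [triangleEigenfunction, show y = 0 from hy]
  · simp only at hxy
    simp only [triangleEigenfunction, hxy]
    ring
  · simp only at hx
    simp [triangleEigenfunction, hx, sin_two_pi]

lemma triangleEigenfunction_eq (p : ℝ × ℝ) :
    triangleEigenfunction p
      = 2 * sin (π * (p.1 + 1)) * sin (π * p.2) * (cos (π * p.2) - cos (π * (p.1 + 1))) := by
  simp only [triangleEigenfunction, mul_assoc, sin_two_mul]
  ring

lemma triangleEigenfunction_pos {p : ℝ × ℝ} (hp : p ∈ triangle) : 0 < triangleEigenfunction p := by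
  obtain ⟨h1, h2, h3, h4⟩ := hp
  have hπ := pi_pos
  have hsin_x : 0 < sin (π * (p.1 + 1)) := sin_pos_of_pos_of_lt_pi (by nlinarith) (by nlinarith)
  have hsin_y : 0 < sin (π * p.2) := sin_pos_of_pos_of_lt_pi (by nlinarith) (by nlinarith)
  have hcos : 0 < cos (π * p.2) - cos (π * (p.1 + 1)) :=
    sub_pos.mpr (cos_lt_cos_of_nonneg_of_le_pi (by nlinarith) (by nlinarith) (by nlinarith))
  rw [triangleEigenfunction_eq]
  positivity

/-- On the open triangle `T` with vertices `(-1,0)`, `(0,0)`, `(0,1)`, the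
function `u(x,y) = sin(π(x+1))sin(2πy) − sin(2π(x+1))sin(πy)` satisfies `−Δu = 5π²u` in `T`,
vanishes on `∂T`, and is positive in `T`.  Consequently (using the characterization of the
first Dirichlet eigenvalue as the unique eigenvalue with a positive eigenfunction) the first
Dirichlet eigenvalue of `T` is `5π²`. -/
theorem stmt9 (T : Set (ℝ × ℝ))
    (hT : T = {p : ℝ × ℝ | -1 < p.1 ∧ p.1 < 0 ∧ 0 < p.2 ∧ p.2 < p.1 + 1})
    (u : ℝ × ℝ → ℝ)
    (hu : u = fun p => Real.sin (π * (p.1 + 1)) * Real.sin (2 * π * p.2)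
      - Real.sin (2 * π * (p.1 + 1)) * Real.sin (π * p.2))
    (lam1 : ℝ)
    (hchar : ∀ (lam : ℝ) (v : ℝ × ℝ → ℝ), ContDiff ℝ 2 v →
      (∀ p ∈ T, -lap2 v p = lam * v p) → (∀ p ∈ frontier T, v p = 0) →
      (∀ p ∈ T, 0 < v p) → lam = lam1) :
    (∀ p ∈ T, -lap2 u p = 5 * π ^ 2 * u p) ∧ (∀ p ∈ frontier T, u p = 0) ∧
    (∀ p ∈ T, 0 < u p) ∧ lam1 = 5 * π ^ 2 := by
  subst hT hu
  have hpde (p : ℝ × ℝ) (_ : p ∈ triangle) :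
      -lap2 triangleEigenfunction p = 5 * π ^ 2 * triangleEigenfunction p :=
    neg_lap2_triangleEigenfunction p
  have hbdry (p : ℝ × ℝ) (hp : p ∈ frontier triangle) : triangleEigenfunction p = 0 :=
    triangleEigenfunction_eq_zero_of_mem_frontier hp
  have hpos (p : ℝ × ℝ) (hp : p ∈ triangle) : 0 < triangleEigenfunction p :=
    triangleEigenfunction_pos hp
  exact ⟨hpde, hbdry, hpos,
    (hchar _ _ contDiff_triangleEigenfunction hpde hbdry hpos).symm⟩
end

section
/- (Mixed eigenvalue upper bound for a rooms-and-passages block.) For an integer j ≥ 0, let T_j ⊆ ℝ² be the union of rectangles (0, 3·2^{-j}) × (0, (1/2)·2^{-3j}) and (2^{-j}, 2·2^{-j}) × (0, 2^{-j}). Let φ_j(x,y) be the piecewise linear function equal to 2ʲx for 0 ≤ x ≤ 2^{-j}, equal to 1 for 2^{-j} ≤ x ≤ 2·2^{-j}, and equal to −2ʲx + 3 for 2·2^{-j} ≤ x ≤ 3·2^{-j}. Then ∫_{T_j} |∇φ_j|² ≤ ∫_{T_j} |φ_j|². Hence the first mixed eigenvalue of T_j (Dirichlet on left and right edges, Neumann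 elsewhere) is at most 1. -/
open Real Set MeasureTheory
open scoped NNReal ENNReal

/-!
`φ_j` is `2ʲ`-Lipschitz and constant on the vertical strip `2⁻ʲ < x < 2·2⁻ʲ`, so `|∇φ_j|² ≤ 2²ʲ`
and it vanishes on the strip. Outside the strip `T_j` consists of the two halves of the passage,
of total area `2·2⁻ʲ · 2⁻³ʲ/2 = 2⁻⁴ʲ`, so the Dirichlet energy is at most `2²ʲ · 2⁻⁴ʲ = 2⁻²ʲ`.
This is the area of the central room, on which `φ_j ≡ 1`.
-/

theorem setIntegral_sq_norm_fderiv_le_of_lipschitzWith {E : Type*} [NormedAddCommGroup E]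
    [NormedSpace ℝ E] [MeasurableSpace E] [OpensMeasurableSpace E] {μ : Measure E}
    {f : E → ℝ} {K : ℝ≥0} (hf : LipschitzWith K f) {U s : Set E} (hU : IsOpen U) {a : ℝ}
    (hfU : EqOn f (fun _ => a) U) (hs : μ s ≠ ∞) :
    ∫ x in s, ‖fderiv ℝ f x‖ ^ 2 ∂μ ≤ K ^ 2 * μ.real (s \ U) := by
  have hbound : ∀ x, ‖fderiv ℝ f x‖ ^ 2 ≤ Uᶜ.indicator (fun _ => (K : ℝ) ^ 2) x := by
    intro x
    by_cases hx : x ∈ U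
    · have : fderiv ℝ f x = 0 :=
        ((Filter.eventuallyEq_of_mem (hU.mem_nhds hx) hfU).fderiv_eq).trans (fderiv_const_apply a)
      simp [this, hx]
    · rw [indicator_of_mem (by exact hx)]
      gcongr
      exact norm_fderiv_le_of_lipschitz ℝ hf
  calc ∫ x in s, ‖fderiv ℝ f x‖ ^ 2 ∂μ ≤ ∫ x in s, Uᶜ.indicator (fun _ => (K : ℝ) ^ 2) x ∂μ :=
        integral_mono_of_nonneg (.of_forall fun _ => by positivity)
          ((integrableOn_const hs).indicator hU.measurableSet.compl) (.of_forall hbound)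
    _ = K ^ 2 * μ.real (s \ U) := by
        rw [setIntegral_indicator hU.measurableSet.compl, setIntegral_const, smul_eq_mul,
          mul_comm, sdiff_eq]

theorem trapezoid_eq_min {c r : ℝ} (hc : 0 ≤ c) (hcr : c * r = 1) (x : ℝ) :
    (if x ≤ r then c * x else if x ≤ 2 * r then 1 else -c * x + 3) =
      min (min (c * x) 1) (-c * x + 3) := by
  split_ifs with h1 h2
  · have : c * x ≤ 1 := hcr ▸ mul_le_mul_of_nonneg_left h1 hc
    simp only [min_def]; split_ifs <;> linarith
  · have : 1 ≤ c * x := hcr ▸ mul_le_mul_of_nonneg_left (not_le.1 h1).le hc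
    have : c * x ≤ 2 := by nlinarith
    simp only [min_def]; split_ifs <;> linarith
  · have : 2 ≤ c * x := by nlinarith [mul_le_mul_of_nonneg_left (not_le.1 h2).le hc]
    simp only [min_def]; split_ifs <;> linarith

theorem lipschitzWith_trapezoid {c r : ℝ} (hc : 0 ≤ c) (hcr : c * r = 1) :
    LipschitzWith c.toNNReal fun x : ℝ =>
      if x ≤ r then c * x else if x ≤ 2 * r then 1 else -c * x + 3 := by
  have affine (a b : ℝ) (ha : |a| = c) : LipschitzWith c.toNNReal fun x : ℝ => a * x + b :=
    .of_dist_le_mul fun x y => by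
      rw [Real.coe_toNNReal _ hc, Real.dist_eq, Real.dist_eq, add_sub_add_right_eq_sub, ← mul_sub,
        abs_mul, ha]
  simp_rw [trapezoid_eq_min hc hcr]
  simpa using ((affine c 0 (abs_of_nonneg hc)).min (.const 1)).min
    (affine (-c) 3 (by rw [abs_neg, abs_of_nonneg hc]))

theorem volume_real_block_diff_le {r h : ℝ} (hr : 0 ≤ r) (hh : 0 ≤ h) (B : Set ℝ) :
    volume.real ((Ioo 0 (3 * r) ×ˢ Ioo 0 h ∪ Ioo r (2 * r) ×ˢ B) \ Prod.fst ⁻¹' Ioo r (2 * r))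
      ≤ 2 * r * h := by
  have hsub : (Ioo 0 (3 * r) ×ˢ Ioo 0 h ∪ Ioo r (2 * r) ×ˢ B) \ Prod.fst ⁻¹' Ioo r (2 * r) ⊆
      (Ioo 0 (3 * r) \ Ioo r (2 * r)) ×ˢ Ioo 0 h := by
    rintro p ⟨hp | hp, hpU⟩
    · exact ⟨⟨hp.1, hpU⟩, hp.2⟩
    · exact absurd hp.1 hpU
  calc _ ≤ volume.real ((Ioo 0 (3 * r) \ Ioo r (2 * r)) ×ˢ Ioo 0 h) := by
        refine measureReal_mono hsub ?_
        rw [Measure.volume_eq_prod, Measure.prod_prod]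
        exact ENNReal.mul_ne_top (measure_ne_top_of_subset sdiff_subset measure_Ioo_lt_top.ne)
          measure_Ioo_lt_top.ne
    _ = 2 * r * h := by
        rw [Measure.volume_eq_prod, measureReal_prod_prod,
          measureReal_sdiff (Ioo_subset_Ioo (by linarith) (by linarith)) measurableSet_Ioo
            measure_Ioo_lt_top.ne, volume_real_Ioo_of_le (by linarith),
          volume_real_Ioo_of_le (by linarith), volume_real_Ioo_of_le hh]
        ring

/-- For the rooms-and-passages block
`T_j = (0, 3·2⁻ʲ)×(0, 2⁻³ʲ/2) ∪ (2⁻ʲ, 2·2⁻ʲ)×(0, 2⁻ʲ)` and the piecewise linear function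
`φ_j` (equal to `2ʲx` on `[0,2⁻ʲ]`, to `1` on `[2⁻ʲ, 2·2⁻ʲ]` and to `-2ʲx+3` on
`[2·2⁻ʲ, 3·2⁻ʲ]`, depending only on `x`), one has `∫_{T_j} |∇φ_j|² ≤ ∫_{T_j} φ_j²`; hence
the first mixed (Dirichlet on the left and right edges, Neumann elsewhere) eigenvalue of
`T_j` is at most `1`. -/
theorem stmt10 (j : ℕ) (r : ℝ) (hr : r = ((2 : ℝ) ^ j)⁻¹) (T : Set (ℝ × ℝ))
    (hT : T = (Ioo 0 (3 * r) ×ˢ Ioo 0 (r ^ 3 / 2)) ∪ (Ioo r (2 * r) ×ˢ Ioo 0 r))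
    (φ : ℝ × ℝ → ℝ)
    (hφ : φ = fun p => if p.1 ≤ r then 2 ^ j * p.1
      else if p.1 ≤ 2 * r then 1 else -(2 ^ j) * p.1 + 3) :
    ∫ p in T, ‖fderiv ℝ φ p‖ ^ 2 ≤ ∫ p in T, (φ p) ^ 2 := by
  have hc : (0 : ℝ) ≤ 2 ^ j := by positivity
  have hcr : (2 : ℝ) ^ j * r = 1 := hr ▸ mul_inv_cancel₀ (by positivity)
  have hr0 : 0 ≤ r := hr ▸ by positivity
  have hlip : LipschitzWith ((2 : ℝ) ^ j).toNNReal φ := by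
    have := (lipschitzWith_trapezoid hc hcr).comp (LipschitzWith.prod_fst (α := ℝ) (β := ℝ))
    rw [mul_one] at this
    exact hφ ▸ this
  have hstrip : EqOn φ (fun _ => 1) (Prod.fst ⁻¹' Ioo r (2 * r)) := fun p hp => by
    simp [hφ, not_le.2 hp.1, hp.2.le]
  have hTb : Bornology.IsBounded T := hT ▸
    ((Metric.isBounded_Ioo _ _).prod (Metric.isBounded_Ioo _ _)).union
      ((Metric.isBounded_Ioo _ _).prod (Metric.isBounded_Ioo _ _))
  have hroom : Ioo r (2 * r) ×ˢ Ioo 0 r ⊆ T := hT ▸ subset_union_right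
  calc ∫ p in T, ‖fderiv ℝ φ p‖ ^ 2
      ≤ ((2 : ℝ) ^ j).toNNReal ^ 2 * volume.real (T \ Prod.fst ⁻¹' Ioo r (2 * r)) :=
        setIntegral_sq_norm_fderiv_le_of_lipschitzWith hlip (isOpen_Ioo.preimage continuous_fst)
          hstrip hTb.measure_lt_top.ne
    _ ≤ (2 ^ j) ^ 2 * (2 * r * (r ^ 3 / 2)) := by
        rw [Real.coe_toNNReal _ hc, hT]
        gcongr
        exact volume_real_block_diff_le hr0 (by positivity) _
    _ = volume.real (Ioo r (2 * r) ×ˢ Ioo 0 r) := by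
        rw [Measure.volume_eq_prod, measureReal_prod_prod, volume_real_Ioo_of_le (by linarith),
          volume_real_Ioo_of_le hr0]
        linear_combination (r ^ 2 * (2 ^ j * r + 1)) * hcr
    _ = ∫ p in Ioo r (2 * r) ×ˢ Ioo 0 r, φ p ^ 2 := by
        rw [setIntegral_congr_fun (g := fun _ => 1) (measurableSet_Ioo.prod measurableSet_Ioo)
          fun p hp => by simp [hstrip hp.1], setIntegral_const, smul_eq_mul, mul_one]
    _ ≤ ∫ p in T, φ p ^ 2 :=
        setIntegral_mono_set
          (((hlip.continuous.pow 2).continuousOn.integrableOn_compact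
            hTb.isCompact_closure).mono_set subset_closure)
          (.of_forall fun _ => by positivity) hroom.eventuallyLE
end

section
/- (Test function estimate on a polygon strip.) Let P ⊆ ℝ² be a bounded open set, let ℓ > 0, and let h : [0, ℓ] → [0, ∞) be measurable with b/2 ≤ h(x) ≤ b for all x ∈ [0,ℓ] and some b > 0, where for x ∈ (0,ℓ) the vertical slice {y : (x,y) ∈ P} has measure h(x) and is an interval starting at a fixed graph. Then for every N ≥ 1 and every nonzero u in the span of the functions u_j(x) = sin(jπx/ℓ)·𝟙_{[0,ℓ]}(x), 1 ≤ j ≤ N, viewed as a function of (x,y) ∈ P depending only on x, one has ∫_P |∇u|² / ∫_P |u|² ≤ 2·(Nπ/ℓ)². -/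
/-!
Since `u` depends on `x` alone, Fubini turns both integrals over `P` into integrals over
`(0, ℓ)` weighted by the slice length `h(x) ∈ [b/2, b]`, so the Rayleigh quotient over `P` is at
most twice the one-dimensional quotient `∫ |g'|² / ∫ |g|²` of `g = ∑ cⱼ sin(jπx/ℓ)`. The sines, and
likewise the cosines, are orthogonal on `(0, ℓ)` with squared norm `ℓ/2`, so that quotient is
`∑ cⱼ² (jπ/ℓ)² / ∑ cⱼ²`, which is at most `(Nπ/ℓ)²`.
-/

open Real Set MeasureTheory Bornology
open scoped ENNReal

theorem deriv_eq_zero_of_eqOn_Iic {f : ℝ → ℝ} {x : ℝ} (hf : EqOn f 0 (Iic x)) :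
    deriv f x = 0 := by
  by_cases hd : DifferentiableAt ℝ f x
  · have h0 : HasDerivWithinAt f 0 (Iic x) x :=
      (hasDerivWithinAt_const x _ 0).congr hf (hf self_mem_Iic)
    exact (uniqueDiffWithinAt_Iic x).eq_deriv _ hd.hasDerivAt.hasDerivWithinAt h0
  · exact deriv_zero_of_not_differentiableAt hd

theorem deriv_eq_zero_of_eqOn_Ici {f : ℝ → ℝ} {x : ℝ} (hf : EqOn f 0 (Ici x)) :
    deriv f x = 0 := by
  by_cases hd : DifferentiableAt ℝ f x
  · have h0 : HasDerivWithinAt f 0 (Ici x) x :=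
      (hasDerivWithinAt_const x _ 0).congr hf (hf self_mem_Ici)
    exact (uniqueDiffWithinAt_Ici x).eq_deriv _ hd.hasDerivAt.hasDerivWithinAt h0
  · exact deriv_zero_of_not_differentiableAt hd

/-- No condition on `g` is needed at the endpoints: there the indicator vanishes on a half-line,
which forces its derivative, if it exists, to be `0`. -/
theorem deriv_indicator_Ioo (g : ℝ → ℝ) (a b : ℝ) :
    deriv ((Ioo a b).indicator g) = (Ioo a b).indicator (deriv g) := by
  ext x
  by_cases hx : x ∈ Ioo a b
  · rw [indicator_of_mem hx]
    exact (Filter.eventuallyEq_of_mem (isOpen_Ioo.mem_nhds hx)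
      fun y hy => indicator_of_mem hy g).deriv_eq
  · rw [indicator_of_notMem hx]
    rcases le_or_gt x a with hxa | hax
    · exact deriv_eq_zero_of_eqOn_Iic fun y hy =>
        indicator_of_notMem (fun hy' => (hy'.1.trans_le (hy.trans hxa)).false) g
    · have hbx : b ≤ x := not_lt.1 fun hxb => hx ⟨hax, hxb⟩
      exact deriv_eq_zero_of_eqOn_Ici fun y hy =>
        indicator_of_notMem (fun hy' => (hy'.2.trans_le (hbx.trans hy)).false) g

theorem norm_fderiv_comp_fst (U : ℝ → ℝ) (p : ℝ × ℝ) :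
    ‖fderiv ℝ (fun q : ℝ × ℝ => U q.1) p‖ = |deriv U p.1| := by
  by_cases hU : DifferentiableAt ℝ U p.1
  · have hF : HasFDerivAt (fun q : ℝ × ℝ => U q.1)
        (deriv U p.1 • ContinuousLinearMap.fst ℝ ℝ ℝ) p :=
      hU.hasDerivAt.comp_hasFDerivAt p (hasFDerivAt_fst (p := p))
    rw [hF.fderiv, norm_smul, ContinuousLinearMap.norm_fst, mul_one, Real.norm_eq_abs]
  · have hUp : ¬DifferentiableAt ℝ (fun q : ℝ × ℝ => U q.1) p := fun h =>
      hU (DifferentiableAt.comp (f := fun x : ℝ => (x, p.2)) p.1 h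
        (differentiableAt_id.prodMk (differentiableAt_const p.2)))
    rw [fderiv_zero_of_not_differentiableAt hUp, deriv_zero_of_not_differentiableAt hU]
    simp

theorem indicator_Icc_eq_indicator_Ioo {g : ℝ → ℝ} {a b : ℝ} (ha : g a = 0) (hb : g b = 0) :
    (Icc a b).indicator g = (Ioo a b).indicator g := by
  ext x
  by_cases hx : x ∈ Ioo a b
  · rw [indicator_of_mem hx, indicator_of_mem (Ioo_subset_Icc_self hx)]
  · rw [indicator_of_notMem hx]
    by_cases hx' : x ∈ Icc a b
    · rw [indicator_of_mem hx']
      rcases hx'.1.eq_or_lt with rfl | hax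
      · exact ha
      · rw [show x = b from hx'.2.eq_or_lt.resolve_right fun hxb => hx ⟨hax, hxb⟩]
        exact hb
    · exact indicator_of_notMem hx' g

theorem setLIntegral_comp_fst {α β : Type*} [MeasurableSpace α] [MeasurableSpace β]
    {μ : Measure α} {ν : Measure β} [SFinite ν] {P : Set (α × β)} (hP : MeasurableSet P)
    {q : α → ℝ≥0∞} (hq : Measurable q) :
    ∫⁻ p in P, q p.1 ∂μ.prod ν = ∫⁻ x, q x * ν {y | (x, y) ∈ P} ∂μ := by
  rw [← lintegral_indicator hP,
    lintegral_prod (P.indicator fun p => q p.1) ((hq.comp measurable_fst).indicator hP).aemeasurable]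
  exact lintegral_congr fun x => lintegral_indicator_const (measurable_prodMk_left hP) (q x)

theorem setIntegral_indicator_comp_fst_bounds {P : Set (ℝ × ℝ)} (hP : MeasurableSet P)
    {s : Set ℝ} (hs : MeasurableSet s) {a b : ℝ} (hb : 0 ≤ b)
    (hslice : ∀ x ∈ s, ENNReal.ofReal a ≤ volume {y | (x, y) ∈ P} ∧
      volume {y | (x, y) ∈ P} ≤ ENNReal.ofReal b)
    {f : ℝ → ℝ} (hfm : Measurable f) (hf : IntegrableOn f s) (hf0 : ∀ x ∈ s, 0 ≤ f x) :
    a * ∫ x in s, f x ≤ ∫ p in P, s.indicator f p.1 ∧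
      ∫ p in P, s.indicator f p.1 ≤ b * ∫ x in s, f x := by
  have hFm : Measurable (s.indicator f) := hfm.indicator hs
  set L := ∫⁻ x in s, ENNReal.ofReal (f x) * volume {y | (x, y) ∈ P} with hL
  have hLP : ∫ p in P, s.indicator f p.1 = L.toReal := by
    rw [integral_eq_lintegral_of_nonneg_ae (f := fun p : ℝ × ℝ => s.indicator f p.1)
      (ae_of_all _ fun p => indicator_nonneg hf0 p.1) (hFm.comp measurable_fst).aestronglyMeasurable,
      Measure.volume_eq_prod, setLIntegral_comp_fst hP hFm.ennreal_ofReal, hL,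
      ← lintegral_indicator hs]
    congr 2 with x
    by_cases hx : x ∈ s <;> simp [hx]
  have hI : ENNReal.ofReal (∫ x in s, f x) = ∫⁻ x in s, ENNReal.ofReal (f x) :=
    ofReal_integral_eq_lintegral_ofReal hf ((ae_restrict_iff' hs).2 (ae_of_all _ hf0))
  have hI0 : 0 ≤ ∫ x in s, f x := setIntegral_nonneg hs hf0
  have hLb : L ≤ ENNReal.ofReal (b * ∫ x in s, f x) := by
    rw [mul_comm, ENNReal.ofReal_mul hI0, hI, ← lintegral_mul_const' _ _ ENNReal.ofReal_ne_top]
    exact setLIntegral_mono' hs fun x hx => by gcongr; exact (hslice x hx).2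
  have haL : ENNReal.ofReal (a * ∫ x in s, f x) ≤ L := by
    rw [mul_comm, ENNReal.ofReal_mul hI0, hI, ← lintegral_mul_const' _ _ ENNReal.ofReal_ne_top]
    exact setLIntegral_mono' hs fun x hx => by gcongr; exact (hslice x hx).1
  rw [hLP]
  exact ⟨(ENNReal.ofReal_le_iff_le_toReal (ne_top_of_le_ne_top ENNReal.ofReal_ne_top hLb)).1 haL,
    ENNReal.toReal_le_of_le_ofReal (by positivity) hLb⟩

theorem setIntegral_indicator_comp_fst_div_le {P : Set (ℝ × ℝ)} (hP : MeasurableSet P)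
    {s : Set ℝ} (hs : MeasurableSet s) {b : ℝ} (hb : 0 < b)
    (hslice : ∀ x ∈ s, ENNReal.ofReal (b / 2) ≤ volume {y | (x, y) ∈ P} ∧
      volume {y | (x, y) ∈ P} ≤ ENNReal.ofReal b)
    {f g : ℝ → ℝ} (hfm : Measurable f) (hf : IntegrableOn f s) (hf0 : ∀ x ∈ s, 0 ≤ f x)
    (hgm : Measurable g) (hg : IntegrableOn g s) (hg0 : ∀ x ∈ s, 0 ≤ g x)
    (hg_pos : 0 < ∫ x in s, g x) :
    (∫ p in P, s.indicator f p.1) / (∫ p in P, s.indicator g p.1) ≤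
      2 * ((∫ x in s, f x) / ∫ x in s, g x) := by
  have hf_le := (setIntegral_indicator_comp_fst_bounds hP hs hb.le hslice hfm hf hf0).2
  have hg_ge := (setIntegral_indicator_comp_fst_bounds hP hs hb.le hslice hgm hg hg0).1
  rw [div_le_iff₀ ((by positivity : 0 < b / 2 * ∫ x in s, g x).trans_le hg_ge)]
  calc ∫ p in P, s.indicator f p.1 ≤ b * ∫ x in s, f x := hf_le
    _ = 2 * ((∫ x in s, f x) / ∫ x in s, g x) * (b / 2 * ∫ x in s, g x) := by
      field_simp
    _ ≤ _ := mul_le_mul_of_nonneg_left hg_ge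
      (by have := setIntegral_nonneg (μ := volume) hs hf0; positivity)

theorem integral_cos_int_mul_pi_div {ℓ : ℝ} (hℓ : ℓ ≠ 0) (m : ℤ) :
    ∫ x in (0 : ℝ)..ℓ, cos (m * π * x / ℓ) = if m = 0 then ℓ else 0 := by
  split_ifs with hm
  · simp [hm]
  · have hω : (m * π / ℓ : ℝ) ≠ 0 := by
      have : (m : ℝ) ≠ 0 := by exact_mod_cast hm
      positivity
    have harg : ∀ x : ℝ, m * π * x / ℓ = m * π / ℓ * x := fun x => by ring
    simp_rw [harg]
    rw [intervalIntegral.integral_comp_mul_left _ hω, integral_cos,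
      div_mul_cancel₀ _ hℓ, sin_int_mul_pi]
    simp

section Orthogonality

variable {ℓ : ℝ} (hℓ : ℓ ≠ 0) {j : ℕ} (hj : j ≠ 0) (k : ℕ)
include hℓ hj

theorem integral_sin_mul_sin :
    ∫ x in (0 : ℝ)..ℓ, sin (j * π * x / ℓ) * sin (k * π * x / ℓ) =
      if j = k then ℓ / 2 else 0 := by
  have h : ∀ x : ℝ, sin (j * π * x / ℓ) * sin (k * π * x / ℓ) =
      (cos (((j - k : ℤ) : ℝ) * π * x / ℓ) - cos (((j + k : ℤ) : ℝ) * π * x / ℓ)) / 2 := by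
    intro x
    push_cast
    rw [show (j - k : ℝ) * π * x / ℓ = j * π * x / ℓ - k * π * x / ℓ by ring,
      show (j + k : ℝ) * π * x / ℓ = j * π * x / ℓ + k * π * x / ℓ by ring, cos_sub, cos_add]
    ring
  simp_rw [h]
  rw [intervalIntegral.integral_div, intervalIntegral.integral_sub
    (Continuous.intervalIntegrable (by fun_prop) _ _)
    (Continuous.intervalIntegrable (by fun_prop) _ _),
    integral_cos_int_mul_pi_div hℓ, integral_cos_int_mul_pi_div hℓ]
  have hjk : (j + k : ℤ) ≠ 0 := by omega
  simp only [sub_eq_zero, Nat.cast_inj, hjk, if_false, sub_zero]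
  split_ifs <;> simp

theorem integral_cos_mul_cos :
    ∫ x in (0 : ℝ)..ℓ, cos (j * π * x / ℓ) * cos (k * π * x / ℓ) =
      if j = k then ℓ / 2 else 0 := by
  have h : ∀ x : ℝ, cos (j * π * x / ℓ) * cos (k * π * x / ℓ) =
      (cos (((j - k : ℤ) : ℝ) * π * x / ℓ) + cos (((j + k : ℤ) : ℝ) * π * x / ℓ)) / 2 := by
    intro x
    push_cast
    rw [show (j - k : ℝ) * π * x / ℓ = j * π * x / ℓ - k * π * x / ℓ by ring,
      show (j + k : ℝ) * π * x / ℓ = j * π * x / ℓ + k * π * x / ℓ by ring, cos_sub, cos_add]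
    ring
  simp_rw [h]
  rw [intervalIntegral.integral_div, intervalIntegral.integral_add
    (Continuous.intervalIntegrable (by fun_prop) _ _)
    (Continuous.intervalIntegrable (by fun_prop) _ _),
    integral_cos_int_mul_pi_div hℓ, integral_cos_int_mul_pi_div hℓ]
  have hjk : (j + k : ℤ) ≠ 0 := by omega
  simp only [sub_eq_zero, Nat.cast_inj, hjk, if_false, add_zero]
  split_ifs <;> simp

end Orthogonality

theorem integral_sq_sum_of_orthogonal {α ι : Type*} [MeasurableSpace α] [DecidableEq ι]
    {μ : Measure α} {s : Finset ι} {T : ι → α → ℝ} {C : ℝ}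
    (hint : ∀ i ∈ s, ∀ j ∈ s, Integrable (fun x => T i x * T j x) μ)
    (horth : ∀ i ∈ s, ∀ j ∈ s, ∫ x, T i x * T j x ∂μ = if i = j then C else 0) (c : ι → ℝ) :
    ∫ x, (∑ i ∈ s, c i * T i x) ^ 2 ∂μ = C * ∑ i ∈ s, c i ^ 2 := by
  have hexp : ∀ x, (∑ i ∈ s, c i * T i x) ^ 2 =
      ∑ i ∈ s, ∑ j ∈ s, c i * c j * (T i x * T j x) := by
    intro x
    rw [sq, Finset.sum_mul_sum]
    exact Finset.sum_congr rfl fun i _ => Finset.sum_congr rfl fun j _ => by ring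
  simp_rw [hexp]
  rw [integral_finsetSum _ fun i hi => integrable_finsetSum _ fun j hj =>
    (hint i hi j hj).const_mul _, Finset.mul_sum]
  refine Finset.sum_congr rfl fun i hi => ?_
  rw [integral_finsetSum _ fun j hj => (hint i hi j hj).const_mul _]
  simp_rw [integral_const_mul]
  rw [Finset.sum_congr rfl fun j hj => by rw [horth i hi j hj]]
  simp only [mul_ite, mul_zero, Finset.sum_ite_eq, hi, if_true]
  ring

section TrigonometricSum

variable (ℓ : ℝ) (s : Finset ℕ) (c : ℕ → ℝ)

noncomputable def sineSum (x : ℝ) : ℝ := ∑ j ∈ s, c j * sin (j * π * x / ℓ)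

noncomputable def cosineSum (x : ℝ) : ℝ := ∑ j ∈ s, c j * cos (j * π * x / ℓ)

@[fun_prop]
theorem continuous_sineSum : Continuous (sineSum ℓ s c) := by
  unfold sineSum; fun_prop

@[fun_prop]
theorem continuous_cosineSum : Continuous (cosineSum ℓ s c) := by
  unfold cosineSum; fun_prop

theorem sineSum_zero : sineSum ℓ s c 0 = 0 := by
  simp [sineSum]

variable {ℓ}

theorem sineSum_self (hℓ : ℓ ≠ 0) : sineSum ℓ s c ℓ = 0 := by
  simp [sineSum, mul_div_cancel_right₀ _ hℓ, sin_nat_mul_pi]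

theorem hasDerivAt_sineSum (x : ℝ) :
    HasDerivAt (sineSum ℓ s c) (cosineSum ℓ s (fun j => c j * (j * π / ℓ)) x) x := by
  refine HasDerivAt.fun_sum fun j _ => ?_
  have hin : HasDerivAt (fun x => j * π * x / ℓ) (j * π / ℓ) x := by
    simpa using ((hasDerivAt_id x).const_mul (j * π)).div_const ℓ
  exact (hin.sin.const_mul (c j)).congr_deriv (by ring)

theorem deriv_sineSum : deriv (sineSum ℓ s c) = cosineSum ℓ s (fun j => c j * (j * π / ℓ)) :=
  funext fun x => (hasDerivAt_sineSum s c x).deriv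

variable (hℓ : 0 < ℓ) {s} (hs : 0 ∉ s)
include hℓ hs

theorem integral_sineSum_sq :
    ∫ x in Ioo 0 ℓ, sineSum ℓ s c x ^ 2 = ℓ / 2 * ∑ j ∈ s, c j ^ 2 := by
  refine integral_sq_sum_of_orthogonal (fun i _ j _ => ?_) (fun i hi j _ => ?_) c
  · exact (Continuous.integrableOn_Icc (by fun_prop)).mono_set Ioo_subset_Icc_self
  · rw [← integral_Ioc_eq_integral_Ioo, ← intervalIntegral.integral_of_le hℓ.le,
      integral_sin_mul_sin hℓ.ne' (ne_of_mem_of_not_mem hi hs)]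

theorem integral_cosineSum_sq :
    ∫ x in Ioo 0 ℓ, cosineSum ℓ s c x ^ 2 = ℓ / 2 * ∑ j ∈ s, c j ^ 2 := by
  refine integral_sq_sum_of_orthogonal (fun i _ j _ => ?_) (fun i hi j _ => ?_) c
  · exact (Continuous.integrableOn_Icc (by fun_prop)).mono_set Ioo_subset_Icc_self
  · rw [← integral_Ioc_eq_integral_Ioo, ← intervalIntegral.integral_of_le hℓ.le,
      integral_cos_mul_cos hℓ.ne' (ne_of_mem_of_not_mem hi hs)]

theorem integral_sineSum_sq_pos (hc : ∃ j ∈ s, c j ≠ 0) :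
    0 < ∫ x in Ioo 0 ℓ, sineSum ℓ s c x ^ 2 := by
  obtain ⟨j, hj, hcj⟩ := hc
  rw [integral_sineSum_sq c hℓ hs]
  have : 0 < ∑ j ∈ s, c j ^ 2 := Finset.sum_pos' (fun _ _ => sq_nonneg _) ⟨j, hj, by positivity⟩
  positivity

theorem integral_deriv_sineSum_sq_div_le {N : ℕ} (hsN : ∀ j ∈ s, j ≤ N) :
    (∫ x in Ioo 0 ℓ, deriv (sineSum ℓ s c) x ^ 2) / ∫ x in Ioo 0 ℓ, sineSum ℓ s c x ^ 2 ≤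
      (N * π / ℓ) ^ 2 := by
  have hfreq : ∑ j ∈ s, (c j * (j * π / ℓ)) ^ 2 ≤ (N * π / ℓ) ^ 2 * ∑ j ∈ s, c j ^ 2 := by
    rw [Finset.mul_sum]
    refine Finset.sum_le_sum fun j hj => ?_
    have hjN : (j : ℝ) ≤ N := by exact_mod_cast hsN j hj
    rw [mul_pow, mul_comm, div_pow, div_pow, mul_pow, mul_pow]
    gcongr
  rw [deriv_sineSum, integral_cosineSum_sq _ hℓ hs, integral_sineSum_sq c hℓ hs]
  refine div_le_of_le_mul₀ (by positivity) (by positivity) ?_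
  calc ℓ / 2 * ∑ j ∈ s, (c j * (j * π / ℓ)) ^ 2
      ≤ ℓ / 2 * ((N * π / ℓ) ^ 2 * ∑ j ∈ s, c j ^ 2) := by gcongr
    _ = (N * π / ℓ) ^ 2 * (ℓ / 2 * ∑ j ∈ s, c j ^ 2) := by ring

end TrigonometricSum

theorem stmt12_general (P : Set (ℝ × ℝ)) (hPo : IsOpen P)
    (ℓ b : ℝ) (hℓ : 0 < ℓ) (hb : 0 < b) (h φ : ℝ → ℝ)
    (hh : ∀ x ∈ Icc 0 ℓ, b / 2 ≤ h x ∧ h x ≤ b)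
    (hslice : ∀ x ∈ Ioo 0 ℓ, {y : ℝ | (x, y) ∈ P} = Ioo (φ x) (φ x + h x))
    (N : ℕ) (c : ℕ → ℝ) (hc : ∃ j ∈ Finset.Icc 1 N, c j ≠ 0)
    (u : ℝ × ℝ → ℝ)
    (hu : u = fun p => if p.1 ∈ Icc 0 ℓ
      then ∑ j ∈ Finset.Icc 1 N, c j * Real.sin (j * π * p.1 / ℓ) else 0) :
    (∫ p in P, ‖fderiv ℝ u p‖ ^ 2) / (∫ p in P, (u p) ^ 2) ≤ 2 * (N * π / ℓ) ^ 2 := by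
  set g := sineSum ℓ (Finset.Icc 1 N) c
  have hs0 : 0 ∉ Finset.Icc 1 N := by simp
  have hu' : u = fun p => (Ioo 0 ℓ).indicator g p.1 := by
    rw [hu, ← indicator_Icc_eq_indicator_Ioo (sineSum_zero ..) (sineSum_self _ c hℓ.ne')]
    ext p
    simp only [indicator_apply, sineSum]
  have hstrip : ∀ x ∈ Ioo 0 ℓ, ENNReal.ofReal (b / 2) ≤ volume {y | (x, y) ∈ P} ∧
      volume {y | (x, y) ∈ P} ≤ ENNReal.ofReal b := fun x hx => by
    rw [hslice x hx, Real.volume_Ioo, add_sub_cancel_left]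
    exact ⟨ENNReal.ofReal_le_ofReal (hh x (Ioo_subset_Icc_self hx)).1,
      ENNReal.ofReal_le_ofReal (hh x (Ioo_subset_Icc_self hx)).2⟩
  have hg' : Continuous (deriv g) := by rw [deriv_sineSum]; fun_prop
  calc (∫ p in P, ‖fderiv ℝ u p‖ ^ 2) / (∫ p in P, (u p) ^ 2)
      = (∫ p in P, (Ioo 0 ℓ).indicator (fun x => deriv g x ^ 2) p.1) /
          ∫ p in P, (Ioo 0 ℓ).indicator (fun x => g x ^ 2) p.1 := by
        congr 1 <;> refine integral_congr_ae (ae_of_all _ fun p => ?_) <;>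
          by_cases hp : p.1 ∈ Ioo 0 ℓ <;>
          simp [hu', norm_fderiv_comp_fst, deriv_indicator_Ioo, hp]
    _ ≤ 2 * ((∫ x in Ioo 0 ℓ, deriv g x ^ 2) / ∫ x in Ioo 0 ℓ, g x ^ 2) :=
      setIntegral_indicator_comp_fst_div_le hPo.measurableSet measurableSet_Ioo hb hstrip
        (hg'.pow 2).measurable ((hg'.pow 2).integrableOn_Icc.mono_set Ioo_subset_Icc_self)
        (fun _ _ => sq_nonneg _) (by fun_prop)
        ((Continuous.integrableOn_Icc (by fun_prop)).mono_set Ioo_subset_Icc_self)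
        (fun _ _ => sq_nonneg _) (integral_sineSum_sq_pos c hℓ hs0 hc)
    _ ≤ 2 * (N * π / ℓ) ^ 2 := by
      gcongr
      exact integral_deriv_sineSum_sq_div_le c hℓ hs0 fun j hj => (Finset.mem_Icc.1 hj).2

/-- Test-function estimate on a strip of a polygon: if the vertical slices
of the bounded open set `P ⊆ ℝ²` over `x ∈ (0,ℓ)` are intervals of length `h(x)` with
`b/2 ≤ h ≤ b`, then every nonzero function `u` in the span of
`sin(jπx/ℓ)·𝟙_{[0,ℓ]}`, `1 ≤ j ≤ N` (viewed as a function on `ℝ²` depending only on `x`)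
has Rayleigh quotient over `P` at most `2(Nπ/ℓ)²`. -/
theorem stmt12 (P : Set (ℝ × ℝ)) (hPo : IsOpen P) (hPb : IsBounded P)
    (ℓ b : ℝ) (hℓ : 0 < ℓ) (hb : 0 < b) (h φ : ℝ → ℝ)
    (hh : ∀ x ∈ Icc 0 ℓ, b / 2 ≤ h x ∧ h x ≤ b)
    (hslice : ∀ x ∈ Ioo 0 ℓ, {y : ℝ | (x, y) ∈ P} = Ioo (φ x) (φ x + h x))
    (N : ℕ) (hN : 1 ≤ N) (c : ℕ → ℝ) (hc : ∃ j ∈ Finset.Icc 1 N, c j ≠ 0)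
    (u : ℝ × ℝ → ℝ)
    (hu : u = fun p => if p.1 ∈ Icc 0 ℓ
      then ∑ j ∈ Finset.Icc 1 N, c j * Real.sin (j * π * p.1 / ℓ) else 0) :
    (∫ p in P, ‖fderiv ℝ u p‖ ^ 2) / (∫ p in P, (u p) ^ 2) ≤ 2 * (N * π / ℓ) ^ 2 :=
  stmt12_general P hPo ℓ b hℓ hb h φ hh hslice N c hc u hu
end
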